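/- arXiv:2007.09216 — 11 statements merged into one kernel-verified Lean document; each statement's English description precedes it below -/
import Mathlib

section
/- The representation of a frame as a positive perturbation of a Parseval frame is unique: if T and T′ are bounded positive operators on a complex Hilbert space K with bounded inverses, and (e_j)_{j∈J}, (e′_j)_{j∈J} are Parseval frames in K with T e_j = T′ e′_j for all j ∈ J, then T = T′ and e_j = e′_j for all j ∈ J. -/
/-!
A Parseval frame reconstructs inner products: `⟪f, g⟫ = ∑ⱼ conj ⟪eⱼ, f⟫ ⟪eⱼ, g⟫` (polarize the
norm identity). For self-adjoint `T`, `⟪eⱼ, T f⟫ = ⟪T eⱼ, f⟫`, so `T eⱼ = T' e'ⱼ` makes the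
frame coefficients of `T f` and `T' f` agree, whence `⟪T f, T g⟫ = ⟪T' f, T' g⟫`, i.e.
`T² = T'²`. Positive square roots are unique, so `T = T'`, and then `eⱼ = e'ⱼ` because `T` is
injective.
-/

open scoped InnerProductSpace

section ParsevalFrame

variable {K : Type*} [NormedAddCommGroup K] [InnerProductSpace ℂ K] {J : Type*}

theorem hasSum_conj_inner_mul_inner_of_parseval (e : J → K)
    (hPar : ∀ f : K, HasSum (fun j => ‖⟪e j, f⟫_ℂ‖ ^ 2) (‖f‖ ^ 2)) (f g : K) :
    HasSum (fun j => (starRingEnd ℂ) ⟪e j, f⟫_ℂ * ⟪e j, g⟫_ℂ) ⟪f, g⟫_ℂ := by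
  have hParℂ (h : K) : HasSum (fun j => (‖⟪e j, h⟫_ℂ‖ : ℂ) ^ 2) ((‖h‖ : ℂ) ^ 2) := by
    exact_mod_cast Complex.hasSum_ofReal.mpr (hPar h)
  have hpolar := (((hParℂ (f + g)).sub (hParℂ (f - g))).add
    (((hParℂ (f - Complex.I • g)).sub (hParℂ (f + Complex.I • g))).mul_right Complex.I)).div_const 4
  rw [inner_eq_sum_norm_sq_div_four (𝕜 := ℂ) f g]
  refine hpolar.congr_fun fun j => ?_
  have hpolar_j := inner_eq_sum_norm_sq_div_four (𝕜 := ℂ) ⟪e j, f⟫_ℂ ⟪e j, g⟫_ℂ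
  rw [RCLike.inner_apply, mul_comm] at hpolar_j
  rw [hpolar_j]
  simp [mul_comm]

theorem inner_eq_inner_of_parseval {e e' : J → K}
    (hPar : ∀ f : K, HasSum (fun j => ‖⟪e j, f⟫_ℂ‖ ^ 2) (‖f‖ ^ 2))
    (hPar' : ∀ f : K, HasSum (fun j => ‖⟪e' j, f⟫_ℂ‖ ^ 2) (‖f‖ ^ 2))
    {f g f' g' : K} (hf : ∀ j, ⟪e j, f⟫_ℂ = ⟪e' j, f'⟫_ℂ)
    (hg : ∀ j, ⟪e j, g⟫_ℂ = ⟪e' j, g'⟫_ℂ) :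
    ⟪f, g⟫_ℂ = ⟪f', g'⟫_ℂ := by
  refine (hasSum_conj_inner_mul_inner_of_parseval e hPar f g).unique ?_
  simpa only [hf, hg] using hasSum_conj_inner_mul_inner_of_parseval e' hPar' f' g'

theorem mul_self_eq_of_parseval {e e' : J → K} {T T' : K →L[ℂ] K}
    (hT : (T : K →ₗ[ℂ] K).IsSymmetric) (hT' : (T' : K →ₗ[ℂ] K).IsSymmetric)
    (hPar : ∀ f : K, HasSum (fun j => ‖⟪e j, f⟫_ℂ‖ ^ 2) (‖f‖ ^ 2))
    (hPar' : ∀ f : K, HasSum (fun j => ‖⟪e' j, f⟫_ℂ‖ ^ 2) (‖f‖ ^ 2))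
    (heq : ∀ j, T (e j) = T' (e' j)) :
    T * T = T' * T' := by
  have hcoeff (f : K) (j : J) : ⟪e j, T f⟫_ℂ = ⟪e' j, T' f⟫_ℂ := by
    calc ⟪e j, T f⟫_ℂ = ⟪T (e j), f⟫_ℂ := (hT _ _).symm
      _ = ⟪e' j, T' f⟫_ℂ := heq j ▸ hT' _ _
  ext f
  refine ext_inner_right ℂ fun g => ?_
  calc ⟪T (T f), g⟫_ℂ = ⟪T f, T g⟫_ℂ := hT _ _
    _ = ⟪T' f, T' g⟫_ℂ := inner_eq_inner_of_parseval hPar hPar' (hcoeff f) (hcoeff g)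
    _ = ⟪T' (T' f), g⟫_ℂ := (hT' _ _).symm

end ParsevalFrame

theorem statement3_general
    {K : Type*} [NormedAddCommGroup K] [InnerProductSpace ℂ K] [CompleteSpace K]
    {J : Type*}
    (T Tinv T' : K →L[ℂ] K)
    (hT : T.IsPositive) (hT' : T'.IsPositive)
    (hTinv₂ : Tinv ∘L T = 1)
    (e e' : J → K)
    (hPar : ∀ f : K, HasSum (fun j => ‖⟪e j, f⟫_ℂ‖ ^ 2) (‖f‖ ^ 2))
    (hPar' : ∀ f : K, HasSum (fun j => ‖⟪e' j, f⟫_ℂ‖ ^ 2) (‖f‖ ^ 2))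
    (heq : ∀ j, T (e j) = T' (e' j)) :
    T = T' ∧ ∀ j, e j = e' j := by
  have hsq : T * T = T' * T' :=
    mul_self_eq_of_parseval hT.isSymmetric hT'.isSymmetric hPar hPar' heq
  have hTT' : T = T' :=
    (CFC.mul_self_eq_mul_self_iff T T' (T.nonneg_iff_isPositive.2 hT)
      (T'.nonneg_iff_isPositive.2 hT')).mp hsq
  have hTinj : Function.Injective T :=
    Function.LeftInverse.injective fun x => congrArg (· x) hTinv₂
  exact ⟨hTT', fun j => hTinj (hTT' ▸ heq j)⟩

/-- Uniqueness of the representation of a frame as a positive perturbation of a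
Parseval frame: if `T, T'` are bounded positive operators with bounded inverses and
`(e j)`, `(e' j)` are Parseval frames with `T (e j) = T' (e' j)` for all `j`, then `T = T'`
and `e j = e' j` for all `j`. -/
theorem statement3
    {K : Type*} [NormedAddCommGroup K] [InnerProductSpace ℂ K] [CompleteSpace K]
    {J : Type*} [Countable J]
    (T Tinv T' Tinv' : K →L[ℂ] K)
    (hT : T.IsPositive) (hT' : T'.IsPositive)
    (hTinv₁ : T ∘L Tinv = 1) (hTinv₂ : Tinv ∘L T = 1)
    (hTinv'₁ : T' ∘L Tinv' = 1) (hTinv'₂ : Tinv' ∘L T' = 1)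
    (e e' : J → K)
    (hPar : ∀ f : K, HasSum (fun j => ‖⟪e j, f⟫_ℂ‖ ^ 2) (‖f‖ ^ 2))
    (hPar' : ∀ f : K, HasSum (fun j => ‖⟪e' j, f⟫_ℂ‖ ^ 2) (‖f‖ ^ 2))
    (heq : ∀ j, T (e j) = T' (e' j)) :
    T = T' ∧ ∀ j, e j = e' j :=
  statement3_general T Tinv T' hT hT' hTinv₂ e e' hPar hPar' heq
end

section
/- Let (e_j)_{j∈J} be a Parseval frame in a complex Hilbert space K with analysis operator θ. Suppose C is a bounded positive operator on K with bounded inverse and (e^o_j)_{j∈J} is a Parseval frame in K such that (ψ_j)_{j∈J} with ψ_j = C⁻¹ e^o_j is a dual frame of (e_j) (i.e., (ψ_j) is a frame and f = ∑_{j∈J} ⟨f, e_j⟩ ψ_j for all f ∈ K). Then C ≤ I (that is, ⟨C f, f⟩ ≤ ‖f‖² for all f) and the Hilbert-space dimension of the closure of the range of I − C² is at most the Hilbert-space dimension of the orthogonal complement of the range of θ in ℓ²(J). -/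
/-!
Let `θ` and `θᵒ` be the analysis isometries of the two Parseval frames. Applying `C` to the dual
frame expansion gives `C h = ∑ ⟪e j, h⟫ eᵒ j`, i.e. `θᵒ† θ = C`. Hence `W := θᵒ - θ C` satisfies
`θ† W = 0`, so `W` maps `K` into `Θᗮ`, and `W† W = 1 - C²`. The latter gives `‖C f‖ ≤ ‖f‖`, hence
`C ≤ I`. Moreover `f ↦ √(1 - C²) f` and `W` have the same norms, so `√(1 - C²) f ↦ W f` extends to
an isometry from the closure of the range of `√(1 - C²)`, which contains the range of `1 - C²`,
into `Θᗮ`.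
-/

open scoped InnerProductSpace ENNReal InnerProduct

open ContinuousLinearMap

section Extension

variable {𝕜 E F G : Type*} [NontriviallyNormedField 𝕜]
  [AddCommGroup E] [Module 𝕜 E] [NormedAddCommGroup F] [NormedSpace 𝕜 F]
  [NormedAddCommGroup G] [NormedSpace 𝕜 G] [CompleteSpace G]

theorem LinearMap.nonempty_linearIsometry_topologicalClosure_range_of_norm_eq
    (T : E →ₗ[𝕜] F) (U : E →ₗ[𝕜] G) (h : ∀ x, ‖U x‖ = ‖T x‖) :
    Nonempty ((LinearMap.range T).topologicalClosure →ₗᵢ[𝕜] G) := by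
  set M := (LinearMap.range T).topologicalClosure
  let e : E →ₗ[𝕜] M := T.codRestrict M fun x =>
    (LinearMap.range T).le_topologicalClosure (LinearMap.mem_range_self T x)
  have he : DenseRange e := by
    rw [DenseRange, Subtype.dense_iff, ← Set.range_comp]
    change (M : Set F) ⊆ closure (Set.range T)
    rw [Submodule.topologicalClosure_coe, LinearMap.coe_range]
  have hbound : ∃ c, ∀ x, ‖U x‖ ≤ c * ‖e x‖ := ⟨1, fun x => by simp [e, h x]⟩
  refine ⟨⟨(U.extendOfNorm e).toLinearMap, fun y => ?_⟩⟩
  refine he.induction (fun y ⟨x, hx⟩ => ?_) (isClosed_eq (by fun_prop) continuous_norm) y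
  rw [← hx]
  simpa [LinearMap.extendOfNorm_eq he hbound, e] using h x

end Extension

section AnalysisOperator

variable (𝕜 : Type*) {K J : Type*} [RCLike 𝕜] [NormedAddCommGroup K] [InnerProductSpace 𝕜 K]

def IsParsevalFrame (v : J → K) : Prop :=
  ∀ f : K, HasSum (fun j => ‖⟪v j, f⟫_𝕜‖ ^ 2) (‖f‖ ^ 2)

variable {𝕜}

lemma IsParsevalFrame.memℓp {v : J → K} (hv : IsParsevalFrame 𝕜 v) (f : K) :
    Memℓp (fun j => ⟪v j, f⟫_𝕜) 2 :=
  memℓp_gen <| by simpa using (hv f).summable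

def IsParsevalFrame.analysis {v : J → K} (hv : IsParsevalFrame 𝕜 v) :
    K →ₗᵢ[𝕜] lp (fun _ : J => 𝕜) 2 where
  toFun f := ⟨_, hv.memℓp f⟩
  map_add' _ _ := lp.ext <| funext fun _ => inner_add_right _ _ _
  map_smul' _ _ := lp.ext <| funext fun _ => inner_smul_right _ _ _
  norm_map' f := by
    have hsum := lp.hasSum_norm (by norm_num : (0 : ℝ) < (2 : ℝ≥0∞).toReal) ⟨_, hv.memℓp f⟩
    simp only [ENNReal.toReal_ofNat, Real.rpow_two] at hsum
    exact (pow_left_inj₀ (norm_nonneg _) (norm_nonneg _) two_ne_zero).mp (hsum.unique (hv f))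

@[simp]
lemma IsParsevalFrame.analysis_apply {v : J → K} (hv : IsParsevalFrame 𝕜 v) (f : K) (j : J) :
    hv.analysis f j = ⟪v j, f⟫_𝕜 := rfl

lemma IsParsevalFrame.adjoint_analysis_comp_analysis [CompleteSpace K] {v w : J → K}
    (hv : IsParsevalFrame 𝕜 v) (hw : IsParsevalFrame 𝕜 w) {C : K →L[𝕜] K}
    (hC : ∀ g, HasSum (fun j => ⟪w j, g⟫_𝕜 • v j) (C g)) :
    hv.analysis.toContinuousLinearMap† ∘L hw.analysis.toContinuousLinearMap = C :=
  ext fun g => ext_inner_left 𝕜 fun f => by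
    rw [comp_apply, adjoint_inner_right]
    refine (lp.hasSum_inner _ _).unique ?_
    simpa [inner_smul_right, mul_comm] using (hC g).mapL (innerSL 𝕜 f)

end AnalysisOperator

section Operators

variable {𝕜 K H : Type*} [RCLike 𝕜] [NormedAddCommGroup K] [InnerProductSpace 𝕜 K]
  [CompleteSpace K] [NormedAddCommGroup H] [InnerProductSpace 𝕜 H] [CompleteSpace H]
  {θ θo : K →L[𝕜] H} {C : K →L[𝕜] K}

lemma adjoint_comp_sub_comp_eq_zero (hθ : θ† ∘L θ = 1) (hC : IsSelfAdjoint C)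
    (hcross : θo† ∘L θ = C) : θ† ∘L (θo - θ ∘L C) = 0 := by
  have : θ† ∘L θo = C := by
    rw [← hC.adjoint_eq, ← hcross, adjoint_comp, adjoint_adjoint]
  rw [comp_sub, this, ← comp_assoc, hθ, one_def, id_comp, sub_self]

lemma adjoint_comp_self_sub_comp (hθ : θ† ∘L θ = 1) (hθo : θo† ∘L θo = 1)
    (hC : IsSelfAdjoint C) (hcross : θo† ∘L θ = C) :
    (θo - θ ∘L C)† ∘L (θo - θ ∘L C) = 1 - C ∘L C := by
  rw [map_sub, sub_comp, adjoint_comp, comp_assoc, adjoint_comp_sub_comp_eq_zero hθ hC hcross,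
    comp_zero, sub_zero, comp_sub, hθo, ← comp_assoc, hcross]

lemma norm_apply_le_of_adjoint_comp_self_eq {A : K →L[𝕜] H}
    (hC : IsSelfAdjoint C) (hA : A† ∘L A = 1 - C ∘L C) (x : K) : ‖C x‖ ≤ ‖x‖ := by
  have hCx := apply_norm_sq_eq_inner_adjoint_left C x
  rw [hC.adjoint_eq] at hCx
  have hsum : ‖A x‖ ^ 2 = ‖x‖ ^ 2 - ‖C x‖ ^ 2 := by
    rw [apply_norm_sq_eq_inner_adjoint_left, hA, sub_apply, inner_sub_left, map_sub, one_def,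
      id_apply, hCx, inner_self_eq_norm_sq]
  exact (pow_le_pow_iff_left₀ (norm_nonneg _) (norm_nonneg _) two_ne_zero).mp
    (by nlinarith [sq_nonneg ‖A x‖])

end Operators

section Sqrt

variable {K H : Type*} [NormedAddCommGroup K] [InnerProductSpace ℂ K] [CompleteSpace K]
  [NormedAddCommGroup H] [InnerProductSpace ℂ H] [CompleteSpace H]

lemma norm_sqrt_adjoint_comp_self_apply (A : K →L[ℂ] H) (x : K) :
    ‖CFC.sqrt (A† ∘L A) x‖ = ‖A x‖ := by
  set R := CFC.sqrt (A† ∘L A)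
  have hA : 0 ≤ A† ∘L A := (nonneg_iff_isPositive _).mpr (isPositive_adjoint_comp_self A)
  have hR : R† ∘L R = A† ∘L A := by
    rw [← star_eq_adjoint, (IsSelfAdjoint.of_nonneg (CFC.sqrt_nonneg _)).star_eq]
    exact CFC.sqrt_mul_sqrt_self _ hA
  rw [← pow_left_inj₀ (norm_nonneg _) (norm_nonneg _) two_ne_zero,
    apply_norm_sq_eq_inner_adjoint_left, apply_norm_sq_eq_inner_adjoint_left, hR]

lemma nonempty_linearIsometry_topologicalClosure_range_adjoint_comp_self (A : K →L[ℂ] H)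
    (p : Submodule ℂ H) [CompleteSpace p] (hA : ∀ x, A x ∈ p) :
    Nonempty
      ((LinearMap.range ((A† ∘L A : K →L[ℂ] K) : K →ₗ[ℂ] K)).topologicalClosure →ₗᵢ[ℂ] p) := by
  set R := CFC.sqrt (A† ∘L A)
  have hrange : LinearMap.range ((A† ∘L A : K →L[ℂ] K) : K →ₗ[ℂ] K) ≤
      LinearMap.range (R : K →ₗ[ℂ] K) := by
    rw [← CFC.sqrt_mul_sqrt_self (A† ∘L A)
      ((nonneg_iff_isPositive _).mpr (isPositive_adjoint_comp_self A))]
    exact LinearMap.range_comp_le_range _ _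
  obtain ⟨φ⟩ := LinearMap.nonempty_linearIsometry_topologicalClosure_range_of_norm_eq
    (R : K →ₗ[ℂ] K) ((A : K →ₗ[ℂ] H).codRestrict p hA) fun x => by
      rw [← Submodule.norm_coe, LinearMap.codRestrict_apply, coe_coe, coe_coe]
      exact (norm_sqrt_adjoint_comp_self_apply A x).symm
  exact ⟨φ.comp ⟨Submodule.inclusion (Submodule.topologicalClosure_mono hrange), fun _ => rfl⟩⟩

end Sqrt

theorem statement5_general
    {K : Type*} [NormedAddCommGroup K] [InnerProductSpace ℂ K] [CompleteSpace K]
    {J : Type*}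
    (e : J → K) (hPar : ∀ f : K, HasSum (fun j => ‖⟪e j, f⟫_ℂ‖ ^ 2) (‖f‖ ^ 2))
    (Θ : Submodule ℂ (lp (fun _ : J => ℂ) 2))
    (hΘ : ∀ x : lp (fun _ : J => ℂ) 2, x ∈ Θ ↔ ∃ f : K, ∀ j, x j = ⟪e j, f⟫_ℂ)
    (C Cinv : K →L[ℂ] K) (hC : C.IsPositive)
    (hCinv₁ : C ∘L Cinv = 1)
    (eo : J → K) (hParo : ∀ f : K, HasSum (fun j => ‖⟪eo j, f⟫_ℂ‖ ^ 2) (‖f‖ ^ 2))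
    (hdual : ∀ f : K, HasSum (fun j => ⟪e j, f⟫_ℂ • Cinv (eo j)) f) :
    (∀ f : K, (⟪f, C f⟫_ℂ).re ≤ ‖f‖ ^ 2) ∧
    Nonempty ((LinearMap.range ((1 - C ∘L C : K →L[ℂ] K) : K →ₗ[ℂ] K)).topologicalClosure →ₗᵢ[ℂ] Θᗮ) := by
  set θ := (IsParsevalFrame.analysis hPar).toContinuousLinearMap
  set θo := (IsParsevalFrame.analysis hParo).toContinuousLinearMap
  have hcross : θo† ∘L θ = C := IsParsevalFrame.adjoint_analysis_comp_analysis hParo hPar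
    fun h => by simpa [← comp_apply C Cinv, hCinv₁] using (hdual h).mapL C
  have hθ : θ† ∘L θ = 1 := LinearIsometry.adjoint_comp_self _
  have hW := adjoint_comp_self_sub_comp hθ (LinearIsometry.adjoint_comp_self _)
    hC.isSelfAdjoint hcross
  set W := θo - θ ∘L C
  have hWΘ (f : K) : W f ∈ Θᗮ := by
    refine (Submodule.mem_orthogonal _ _).mpr fun x hx => ?_
    obtain ⟨g, hg⟩ := (hΘ x).mp hx
    rw [show x = θ g from lp.ext (funext hg), ← adjoint_inner_right, ← comp_apply,
      adjoint_comp_sub_comp_eq_zero hθ hC.isSelfAdjoint hcross, zero_apply, inner_zero_right]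
  refine ⟨fun f => ?_,
    hW ▸ nonempty_linearIsometry_topologicalClosure_range_adjoint_comp_self W Θᗮ hWΘ⟩
  calc (⟪f, C f⟫_ℂ).re ≤ ‖f‖ * ‖C f‖ := (Complex.re_le_norm _).trans (norm_inner_le_norm _ _)
    _ ≤ ‖f‖ ^ 2 := by
      rw [sq]
      exact mul_le_mul_of_nonneg_left
        (norm_apply_le_of_adjoint_comp_self_eq hC.isSelfAdjoint hW f) (norm_nonneg f)

/-- Let `(e j)` be a Parseval frame in `K` whose analysis operator has range `Θ`
in `ℓ²(J)`. Suppose `C` is a bounded positive operator with bounded inverse `Cinv` and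
`(e^o j)` is a Parseval frame such that `ψ j = Cinv (e^o j)` is a dual frame of `(e j)`.
Then `C ≤ I` (i.e. `⟨C f, f⟩ ≤ ‖f‖²` for all `f`) and the Hilbert-space dimension of the
closure of the range of `I − C²` is at most that of `Θᗮ` (expressed by the existence of a
linear isometric embedding).
(The paper's inner product `(f, g)`, linear in the first argument, is `⟪g, f⟫_ℂ`.) -/
theorem statement5
    {K : Type*} [NormedAddCommGroup K] [InnerProductSpace ℂ K] [CompleteSpace K]
    {J : Type*} [Countable J]
    (e : J → K) (hPar : ∀ f : K, HasSum (fun j => ‖⟪e j, f⟫_ℂ‖ ^ 2) (‖f‖ ^ 2))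
    (Θ : Submodule ℂ (lp (fun _ : J => ℂ) 2))
    (hΘ : ∀ x : lp (fun _ : J => ℂ) 2, x ∈ Θ ↔ ∃ f : K, ∀ j, x j = ⟪e j, f⟫_ℂ)
    (C Cinv : K →L[ℂ] K) (hC : C.IsPositive)
    (hCinv₁ : C ∘L Cinv = 1) (hCinv₂ : Cinv ∘L C = 1)
    (eo : J → K) (hParo : ∀ f : K, HasSum (fun j => ‖⟪eo j, f⟫_ℂ‖ ^ 2) (‖f‖ ^ 2))
    (hψframe : ∃ A B : ℝ, 0 < A ∧ A ≤ B ∧ ∀ f : K, ∃ s : ℝ,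
        HasSum (fun j => ‖⟪Cinv (eo j), f⟫_ℂ‖ ^ 2) s ∧
        A * ‖f‖ ^ 2 ≤ s ∧ s ≤ B * ‖f‖ ^ 2)
    (hdual : ∀ f : K, HasSum (fun j => ⟪e j, f⟫_ℂ • Cinv (eo j)) f) :
    (∀ f : K, (⟪f, C f⟫_ℂ).re ≤ ‖f‖ ^ 2) ∧
    Nonempty ((LinearMap.range ((1 - C ∘L C : K →L[ℂ] K) : K →ₗ[ℂ] K)).topologicalClosure →ₗᵢ[ℂ] Θᗮ) :=
  statement5_general e hPar Θ hΘ C Cinv hC hCinv₁ eo hParo hdual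
end

section
/- Let H be a complex Hilbert space, K ⊆ H a closed subspace with orthogonal projection P, and (𝐞_j)_{j∈J} an orthonormal basis of H, so that (e_j)_{j∈J} with e_j = P 𝐞_j is a Parseval frame in K. Let C be a bounded positive operator on K with bounded inverse, and let W be a unitary operator on H such that P(W k) = C k for all k ∈ K. Then the family (ψ_j)_{j∈J} defined by ψ_j = C⁻¹ P(W 𝐞_j) is a dual frame of (e_j): it is a frame in K and f = ∑_{j∈J} ⟨f, e_j⟩ ψ_j for all f ∈ K; moreover ψ_j = e_j + C⁻¹ P(W(𝐞_j − e_j)) for every j ∈ J. -/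
/-!
Put `T := C⁻¹ P W : H → K` and let `S : K → H` be the inclusion. The hypothesis `P W = C` on `K`
says `T S = 1`, and `e_j = S* 𝐞_j`, `ψ_j = T 𝐞_j`. For any bounded `T`, `S` with `T S = 1`,
expanding `S f` in the basis `𝐞` and applying `T` gives `f = ∑ ⟨S* 𝐞_j, f⟩ T 𝐞_j`; Parseval's
identity gives `∑ |⟨T 𝐞_j, f⟩|² = ‖T* f‖²`, which is at most `‖T‖² ‖f‖²` and at least a multiple
of `‖f‖²` because `S* T* = 1`. The formula for `ψ_j` is `T 𝐞_j = T (𝐞_j - S e_j) + T S e_j`.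
-/

open scoped InnerProductSpace

open ContinuousLinearMap

def IsFrame (𝕜 : Type*) {F ι : Type*} [RCLike 𝕜] [NormedAddCommGroup F] [InnerProductSpace 𝕜 F]
    (φ : ι → F) : Prop :=
  ∃ A B : ℝ, 0 < A ∧ A ≤ B ∧ ∀ f : F, ∃ s : ℝ,
    HasSum (fun i => ‖⟪φ i, f⟫_𝕜‖ ^ 2) s ∧ A * ‖f‖ ^ 2 ≤ s ∧ s ≤ B * ‖f‖ ^ 2

namespace HilbertBasis

variable {ι 𝕜 E F : Type*} [RCLike 𝕜]
  [NormedAddCommGroup E] [InnerProductSpace 𝕜 E]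
  [NormedAddCommGroup F] [InnerProductSpace 𝕜 F]

theorem hasSum_norm_inner_sq (b : HilbertBasis ι 𝕜 E) (x : E) :
    HasSum (fun i => ‖⟪b i, x⟫_𝕜‖ ^ 2) (‖x‖ ^ 2) := by
  have h := (b.hasSum_inner_mul_inner x x).mapL RCLike.reCLM
  rw [RCLike.reCLM_apply, inner_self_eq_norm_sq] at h
  refine h.congr_fun fun i => ?_
  rw [← inner_conj_symm x (b i), RCLike.conj_mul]
  norm_cast

variable [CompleteSpace E] [CompleteSpace F]

theorem hasSum_norm_inner_map_sq (b : HilbertBasis ι 𝕜 E) (T : E →L[𝕜] F) (f : F) :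
    HasSum (fun i => ‖⟪T (b i), f⟫_𝕜‖ ^ 2) (‖adjoint T f‖ ^ 2) := by
  simpa only [adjoint_inner_right] using b.hasSum_norm_inner_sq (adjoint T f)

theorem hasSum_inner_adjoint_smul_map (b : HilbertBasis ι 𝕜 E) {T : E →L[𝕜] F}
    {S : F →L[𝕜] E} (hTS : T ∘L S = 1) (f : F) :
    HasSum (fun i => ⟪adjoint S (b i), f⟫_𝕜 • T (b i)) f := by
  have h := (b.hasSum_repr (S f)).mapL T
  rw [← comp_apply, hTS, one_apply_eq_self] at h
  refine h.congr_fun fun i => ?_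
  rw [map_smul, adjoint_inner_left, b.repr_apply_apply]

theorem isFrame_map_of_comp_eq_one (b : HilbertBasis ι 𝕜 E) {T : E →L[𝕜] F}
    {S : F →L[𝕜] E} (hTS : T ∘L S = 1) : IsFrame 𝕜 fun i => T (b i) := by
  have hST : adjoint S ∘L adjoint T = 1 := by rw [← adjoint_comp, hTS, adjoint_one]
  refine ⟨((‖adjoint S‖ + 1) ^ 2)⁻¹, ‖adjoint T‖ ^ 2 + 1, by positivity, ?_, fun f => ?_⟩
  · calc ((‖adjoint S‖ + 1) ^ 2)⁻¹ ≤ 1 :=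
          inv_le_one_of_one_le₀ (by nlinarith [norm_nonneg (adjoint S)])
      _ ≤ ‖adjoint T‖ ^ 2 + 1 := by nlinarith
  refine ⟨_, b.hasSum_norm_inner_map_sq T f, ?_, ?_⟩
  · have hf : ‖f‖ ≤ (‖adjoint S‖ + 1) * ‖adjoint T f‖ := calc
      ‖f‖ = ‖adjoint S (adjoint T f)‖ := by rw [← comp_apply, hST, one_apply_eq_self]
      _ ≤ ‖adjoint S‖ * ‖adjoint T f‖ := le_opNorm _ _
      _ ≤ (‖adjoint S‖ + 1) * ‖adjoint T f‖ := by nlinarith [norm_nonneg (adjoint T f)]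
    rw [inv_mul_le_iff₀ (by positivity), ← mul_pow]
    exact pow_le_pow_left₀ (norm_nonneg f) hf 2
  · calc ‖adjoint T f‖ ^ 2 ≤ (‖adjoint T‖ * ‖f‖) ^ 2 :=
          pow_le_pow_left₀ (norm_nonneg _) (le_opNorm _ _) 2
      _ ≤ (‖adjoint T‖ ^ 2 + 1) * ‖f‖ ^ 2 := by nlinarith [sq_nonneg ‖f‖]

end HilbertBasis

theorem statement8_general
    {H : Type*} [NormedAddCommGroup H] [InnerProductSpace ℂ H] [CompleteSpace H]
    {J : Type*}
    (Ksub : Submodule ℂ H) [CompleteSpace Ksub]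
    (b : HilbertBasis J ℂ H)
    (e : J → Ksub) (he : ∀ j, e j = Ksub.orthogonalProjectionOnto (b j))
    (C Cinv : Ksub →L[ℂ] Ksub)
    (hCinv₂ : Cinv ∘L C = 1)
    (W : H ≃ₗᵢ[ℂ] H)
    (hW : ∀ k : Ksub, Ksub.orthogonalProjectionOnto (W (k : H)) = C k)
    (ψ : J → Ksub) (hψ : ∀ j, ψ j = Cinv (Ksub.orthogonalProjectionOnto (W (b j)))) :
    (∀ f : Ksub, HasSum (fun j => ‖⟪e j, f⟫_ℂ‖ ^ 2) (‖f‖ ^ 2)) ∧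
    (∃ A B : ℝ, 0 < A ∧ A ≤ B ∧ ∀ f : Ksub, ∃ s : ℝ,
        HasSum (fun j => ‖⟪ψ j, f⟫_ℂ‖ ^ 2) s ∧
        A * ‖f‖ ^ 2 ≤ s ∧ s ≤ B * ‖f‖ ^ 2) ∧
    (∀ f : Ksub, HasSum (fun j => ⟪e j, f⟫_ℂ • ψ j) f) ∧
    ∀ j, ψ j = e j + Cinv (Ksub.orthogonalProjectionOnto (W (b j - (e j : H)))) := by
  set T : H →L[ℂ] Ksub := Cinv ∘L Ksub.orthogonalProjectionOnto ∘L (W : H →L[ℂ] H)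
  have hTS : T ∘L Ksub.subtypeL = 1 := by
    ext1 k
    change Cinv (Ksub.orthogonalProjectionOnto (W k)) = k
    rw [hW, ← comp_apply, hCinv₂, one_apply_eq_self]
  obtain rfl : e = fun j => adjoint Ksub.subtypeL (b j) := by
    simpa only [Ksub.adjoint_subtypeL] using funext he
  obtain rfl : ψ = fun j => T (b j) := funext hψ
  refine ⟨fun f => ?_, b.isFrame_map_of_comp_eq_one hTS, b.hasSum_inner_adjoint_smul_map hTS,
    fun j => ?_⟩
  · simpa [adjoint_adjoint] using b.hasSum_norm_inner_map_sq (adjoint Ksub.subtypeL) f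
  · change T (b j) = _ + T (b j - Ksub.subtypeL _)
    rw [map_sub, ← comp_apply T, hTS, one_apply_eq_self, add_sub_cancel]

/-- Let `H` be a complex Hilbert space, `Ksub ⊆ H` a closed subspace with
orthogonal projection `P`, and `b` an orthonormal basis of `H`, so that `e j = P (b j)` is a
Parseval frame in `Ksub`. Let `C` be a bounded positive operator on `Ksub` with bounded
inverse `Cinv`, and `W` a unitary operator on `H` with `P (W k) = C k` for all `k ∈ Ksub`.
Then `ψ j = Cinv (P (W (b j)))` is a dual frame of `(e j)`: it is a frame in `Ksub` and
`f = ∑ j, ⟨f, e_j⟩ ψ_j` for all `f ∈ Ksub`; moreover `ψ j = e j + Cinv (P (W (b j − e j)))`.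
(The paper's inner product `(f, g)`, linear in the first argument, is `⟪g, f⟫_ℂ`.) -/
theorem statement8
    {H : Type*} [NormedAddCommGroup H] [InnerProductSpace ℂ H] [CompleteSpace H]
    {J : Type*} [Countable J]
    (Ksub : Submodule ℂ H) [CompleteSpace Ksub]
    (b : HilbertBasis J ℂ H)
    (e : J → Ksub) (he : ∀ j, e j = Ksub.orthogonalProjectionOnto (b j))
    (C Cinv : Ksub →L[ℂ] Ksub) (hC : C.IsPositive)
    (hCinv₁ : C ∘L Cinv = 1) (hCinv₂ : Cinv ∘L C = 1)
    (W : H ≃ₗᵢ[ℂ] H)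
    (hW : ∀ k : Ksub, Ksub.orthogonalProjectionOnto (W (k : H)) = C k)
    (ψ : J → Ksub) (hψ : ∀ j, ψ j = Cinv (Ksub.orthogonalProjectionOnto (W (b j)))) :
    (∀ f : Ksub, HasSum (fun j => ‖⟪e j, f⟫_ℂ‖ ^ 2) (‖f‖ ^ 2)) ∧
    (∃ A B : ℝ, 0 < A ∧ A ≤ B ∧ ∀ f : Ksub, ∃ s : ℝ,
        HasSum (fun j => ‖⟪ψ j, f⟫_ℂ‖ ^ 2) s ∧
        A * ‖f‖ ^ 2 ≤ s ∧ s ≤ B * ‖f‖ ^ 2) ∧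
    (∀ f : Ksub, HasSum (fun j => ⟪e j, f⟫_ℂ • ψ j) f) ∧
    ∀ j, ψ j = e j + Cinv (Ksub.orthogonalProjectionOnto (W (b j - (e j : H)))) :=
  statement8_general Ksub b e he C Cinv hCinv₂ W hW ψ hψ
end

section
/- Let H be a complex Hilbert space of finite dimension K+1 (K ≥ 1), let (𝐞_j)_{j=1}^{K+1} be an orthonormal basis of H, let K₀ ⊆ H be a K-dimensional subspace with orthogonal projection P, set e_j := P 𝐞_j (a Parseval frame of K₀ with excess one), and let m be a unit vector spanning the orthogonal complement of K₀ in H. Then a family (ψ_j)_{j=1}^{K+1} of vectors of K₀ satisfies f = ∑_{j=1}^{K+1} ⟨f, ψ_j⟩ e_j for all f ∈ K₀ (i.e., is a dual frame of (e_j)) if and only if there exists a vector v ∈ K₀ such that ψ_j = e_j + ⟨𝐞_j, m⟩ v for all j = 1, …, K+1. -/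
open scoped InnerProductSpace ComplexConjugate

/-!
Synthesis with `e j = P (b j)` is `P` composed with synthesis in the orthonormal basis `b`. By
Parseval, `ψ` is a dual frame iff for every `f` the coefficients `⟪ψ j - e j, f⟫` synthesize in `b`
to a vector of `K₀ᗮ = ℂ ∙ m`, i.e. are a multiple of `(⟪b j, m⟫)_j`. Testing against all `f`,
this forces `ψ j - e j` to be the rank-one family `⟪m, b j⟫ • v`.
-/

section

variable {ι 𝕜 E : Type*} [RCLike 𝕜] [NormedAddCommGroup E] [InnerProductSpace 𝕜 E]

theorem exists_forall_eq_smul_iff_forall_inner_eq_mul_conj {w : ι → 𝕜} (hw : w ≠ 0)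
    (d : ι → E) :
    (∃ v : E, ∀ j, d j = w j • v) ↔ ∀ f : E, ∃ t : 𝕜, ∀ j, ⟪d j, f⟫_𝕜 = t * conj (w j) := by
  refine ⟨?_, fun h => ?_⟩
  · rintro ⟨v, hv⟩ f
    exact ⟨⟪v, f⟫_𝕜, fun j => by rw [hv j, inner_smul_left, mul_comm]⟩
  obtain ⟨j₀, hj₀⟩ := Function.ne_iff.mp hw
  refine ⟨(w j₀)⁻¹ • d j₀, fun j => ext_inner_right 𝕜 fun f => ?_⟩
  obtain ⟨t, ht⟩ := h f
  rw [smul_smul, inner_smul_left, ht, ht, map_mul, map_inv₀]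
  field_simp [(map_ne_zero (starRingEnd 𝕜)).mpr hj₀]

variable [Fintype ι]

theorem OrthonormalBasis.sum_smul_mem_span_singleton_iff (b : OrthonormalBasis ι 𝕜 E)
    (c : ι → 𝕜) (m : E) :
    ∑ j, c j • b j ∈ 𝕜 ∙ m ↔ ∃ t : 𝕜, ∀ j, c j = t * ⟪b j, m⟫_𝕜 := by
  rw [Submodule.mem_span_singleton]
  refine exists_congr fun t => ⟨fun h j => ?_, fun h => ?_⟩
  · rw [← b.orthonormal.inner_right_fintype c j, ← h, inner_smul_right]
  · rw [← b.sum_repr' m, Finset.smul_sum]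
    simp only [smul_smul, h]

namespace Submodule

variable (K : Submodule 𝕜 E) [K.HasOrthogonalProjection]

theorem sum_smul_orthogonalProjectionOnto_eq_zero_iff (b : ι → E) (c : ι → 𝕜) :
    ∑ j, c j • K.orthogonalProjectionOnto (b j) = 0 ↔ ∑ j, c j • b j ∈ Kᗮ := by
  simp only [← orthogonalProjectionOnto_eq_zero_iff, map_sum, map_smul]

theorem sum_inner_orthogonalProjectionOnto_smul_eq_self (b : OrthonormalBasis ι 𝕜 E) (f : K) :
    ∑ j, ⟪K.orthogonalProjectionOnto (b j), f⟫_𝕜 • K.orthogonalProjectionOnto (b j) = f := by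
  simp only [inner_orthogonalProjectionOnto_eq_of_mem_right, ← map_smul, ← map_sum,
    b.sum_repr', orthogonalProjectionOnto_mem_subspace_eq_self]

end Submodule

end

/-- The paper's inner product `(f, g)`, linear in the first argument, is `⟪g, f⟫_ℂ`. -/
theorem statement9_general
    {H : Type*} [NormedAddCommGroup H] [InnerProductSpace ℂ H] [FiniteDimensional ℂ H]
    (K : ℕ) (b : OrthonormalBasis (Fin (K + 1)) ℂ H) (K₀ : Submodule ℂ H)
    (e : Fin (K + 1) → K₀) (he : ∀ j, e j = Submodule.orthogonalProjectionOnto K₀ (b j))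
    (m : H) (hm : ‖m‖ = 1) (hmspan : K₀ᗮ = Submodule.span ℂ {m})
    (ψ : Fin (K + 1) → K₀) :
    (∀ f : K₀, ∑ j, ⟪ψ j, f⟫_ℂ • e j = f) ↔
      ∃ v : K₀, ∀ j, ψ j = e j + ⟪m, b j⟫_ℂ • v := by
  obtain rfl : e = fun j => K₀.orthogonalProjectionOnto (b j) := funext he
  have hw : (fun j => ⟪m, b j⟫_ℂ) ≠ 0 := fun h => by
    have : m = 0 := InnerProductSpace.ext_inner_right_basis b.toBasis fun j => by
      simpa using congrFun h j
    simp [this] at hm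
  calc (∀ f : K₀, ∑ j, ⟪ψ j, f⟫_ℂ • K₀.orthogonalProjectionOnto (b j) = f)
      ↔ ∀ f : K₀, ∑ j, ⟪ψ j - K₀.orthogonalProjectionOnto (b j), f⟫_ℂ •
          K₀.orthogonalProjectionOnto (b j) = 0 := forall_congr' fun f => by
        simp only [inner_sub_left, sub_smul, Finset.sum_sub_distrib,
          K₀.sum_inner_orthogonalProjectionOnto_smul_eq_self b, sub_eq_zero]
    _ ↔ ∀ f : K₀, ∃ t : ℂ, ∀ j, ⟪ψ j - K₀.orthogonalProjectionOnto (b j), f⟫_ℂ =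
          t * ⟪b j, m⟫_ℂ := by
        simp only [K₀.sum_smul_orthogonalProjectionOnto_eq_zero_iff, hmspan,
          b.sum_smul_mem_span_singleton_iff]
    _ ↔ ∃ v : K₀, ∀ j, ψ j - K₀.orthogonalProjectionOnto (b j) = ⟪m, b j⟫_ℂ • v := by
        simpa only [inner_conj_symm] using
          (exists_forall_eq_smul_iff_forall_inner_eq_mul_conj hw _).symm
    _ ↔ _ := by simp only [sub_eq_iff_eq_add']

/-- Let `H` be a complex Hilbert space of dimension `K+1` with orthonormal basis
`(b j)`, `K₀` a `K`-dimensional subspace with orthogonal projection `P`, `e j = P (b j)` (a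
Parseval frame of `K₀` with excess one), and `m` a unit vector spanning `K₀ᗮ`. Then a family
`(ψ j)` of vectors of `K₀` satisfies `f = ∑ j, ⟨f, ψ_j⟩ e_j` for all `f ∈ K₀` (i.e. is a dual
frame of `(e j)`) iff there is `v ∈ K₀` with `ψ j = e j + ⟨b j, m⟩ v` for all `j`.
(The paper's inner product `(f, g)`, linear in the first argument, is `⟪g, f⟫_ℂ`.) -/
theorem statement9
    {H : Type*} [NormedAddCommGroup H] [InnerProductSpace ℂ H] [FiniteDimensional ℂ H]
    (K : ℕ) (hK : 1 ≤ K) (hdimH : Module.finrank ℂ H = K + 1)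
    (b : OrthonormalBasis (Fin (K + 1)) ℂ H)
    (K₀ : Submodule ℂ H) (hdimK₀ : Module.finrank ℂ K₀ = K)
    (e : Fin (K + 1) → K₀) (he : ∀ j, e j = Submodule.orthogonalProjectionOnto K₀ (b j))
    (m : H) (hm : ‖m‖ = 1) (hmspan : K₀ᗮ = Submodule.span ℂ {m})
    (ψ : Fin (K + 1) → K₀) :
    (∀ f : K₀, ∑ j, ⟪ψ j, f⟫_ℂ • e j = f) ↔
      ∃ v : K₀, ∀ j, ψ j = e j + ⟪m, b j⟫_ℂ • v :=
  statement9_general K b K₀ e he m hm hmspan ψ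
end

section
/- Let (𝐛_i)_{i=1}^{K} be an orthonormal basis of a K-dimensional complex Hilbert space K (K ≥ 1). Define e_j := 𝐛_j − (1/K) ∑_{i=1}^{K} 𝐛_i for 1 ≤ j ≤ K and e_{K+1} := (1/√K) ∑_{i=1}^{K} 𝐛_i. Then the K+1 vectors of K ⊕ ℂ given by 𝐞_j := (e_j, 1/√K) for 1 ≤ j ≤ K and 𝐞_{K+1} := (e_{K+1}, 0) form an orthonormal basis of K ⊕ ℂ; in particular (e_j)_{j=1}^{K+1} is a Parseval frame of K and its complementary Parseval frame in ℂ consists of the scalars ẽ_j = 1/√K (j ≤ K) and ẽ_{K+1} = 0. -/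
/-!
With `s = ∑ i, b i` one has `⟪b i, s⟫ = 1` and `⟪s, s⟫ = K`. Hence the centred vectors
`b j - s / K` are orthogonal to `s` and have Gram matrix `I - J / K`; the second coordinate
`1 / √K` contributes exactly `J / K`, so the `ee j` are orthonormal, and `K + 1` of them span the
`(K + 1)`-dimensional space `E ⊕ ℂ`. Projecting an orthonormal basis of `E ⊕ ℂ` onto `E` gives a
Parseval frame of `E`: this is Parseval's identity for the vector `(f, 0)`.
-/

open scoped InnerProductSpace

theorem RCLike.inner_inv_sqrt_natCast_self {𝕜 : Type*} [RCLike 𝕜] (n : ℕ) :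
    ⟪((√n : ℝ) : 𝕜)⁻¹, ((√n : ℝ) : 𝕜)⁻¹⟫_𝕜 = (n : 𝕜)⁻¹ := by
  rw [RCLike.inner_apply', map_inv₀, RCLike.conj_ofReal, ← mul_inv, ← RCLike.ofReal_mul,
    Real.mul_self_sqrt n.cast_nonneg, RCLike.ofReal_natCast]

section Average

variable {𝕜 E ι : Type*} [RCLike 𝕜] [NormedAddCommGroup E] [InnerProductSpace 𝕜 E] [Fintype ι]
  {v : ι → E}

theorem Orthonormal.inner_apply_sum (hv : Orthonormal 𝕜 v) (i : ι) : ⟪v i, ∑ j, v j⟫_𝕜 = 1 := by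
  classical
  simp [inner_sum, orthonormal_iff_ite.mp hv]

theorem Orthonormal.inner_sum_apply (hv : Orthonormal 𝕜 v) (i : ι) : ⟪∑ j, v j, v i⟫_𝕜 = 1 := by
  rw [← inner_conj_symm, hv.inner_apply_sum, map_one]

theorem Orthonormal.inner_sum_sum (hv : Orthonormal 𝕜 v) :
    ⟪∑ j, v j, ∑ j, v j⟫_𝕜 = Fintype.card ι := by
  rw [sum_inner]
  simp [hv.inner_apply_sum]

theorem Orthonormal.inner_sub_average_sum (hv : Orthonormal 𝕜 v) (i : ι) :
    ⟪v i - (Fintype.card ι : 𝕜)⁻¹ • ∑ j, v j, ∑ j, v j⟫_𝕜 = 0 := by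
  have : (Fintype.card ι : 𝕜) ≠ 0 := Nat.cast_ne_zero.mpr (Fintype.card_pos_iff.mpr ⟨i⟩).ne'
  rw [inner_sub_left, inner_smul_left, hv.inner_apply_sum, hv.inner_sum_sum, map_inv₀,
    map_natCast, inv_mul_cancel₀ this, sub_self]

theorem Orthonormal.inner_sub_average_sub_average [DecidableEq ι] (hv : Orthonormal 𝕜 v)
    (i j : ι) :
    ⟪v i - (Fintype.card ι : 𝕜)⁻¹ • ∑ k, v k, v j - (Fintype.card ι : 𝕜)⁻¹ • ∑ k, v k⟫_𝕜 =
      (if i = j then 1 else 0) - (Fintype.card ι : 𝕜)⁻¹ := by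
  rw [inner_sub_right, inner_smul_right, hv.inner_sub_average_sum, mul_zero, sub_zero,
    inner_sub_left, inner_smul_left, hv.inner_sum_apply, orthonormal_iff_ite.mp hv, map_inv₀,
    map_natCast, mul_one]

theorem Orthonormal.inner_inv_sqrt_card_smul_sum (hv : Orthonormal 𝕜 v) [Nonempty ι] :
    ⟪((√(Fintype.card ι) : ℝ) : 𝕜)⁻¹ • ∑ j, v j,
      ((√(Fintype.card ι) : ℝ) : 𝕜)⁻¹ • ∑ j, v j⟫_𝕜 = 1 := by
  rw [inner_smul_left, inner_smul_right, hv.inner_sum_sum, ← mul_assoc, ← RCLike.inner_apply',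
    RCLike.inner_inv_sqrt_natCast_self,
    inv_mul_cancel₀ (Nat.cast_ne_zero.mpr Fintype.card_ne_zero)]

end Average

theorem OrthonormalBasis.sum_sq_norm_inner_fst {𝕜 E F ι : Type*} [RCLike 𝕜]
    [NormedAddCommGroup E] [InnerProductSpace 𝕜 E] [NormedAddCommGroup F] [InnerProductSpace 𝕜 F]
    [Fintype ι]
    (B : OrthonormalBasis ι 𝕜 (WithLp 2 (E × F))) (f : E) :
    ∑ i, ‖⟪(B i).fst, f⟫_𝕜‖ ^ 2 = ‖f‖ ^ 2 := by
  simpa [WithLp.prod_norm_sq_eq_of_L2] using B.sum_sq_norm_inner_right (WithLp.toLp 2 (f, 0))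

/-- Let `(b i)` be an orthonormal basis of a `K`-dimensional complex Hilbert
space `E` (`K ≥ 1`). Define `e j = b j − (1/K) ∑ i, b i` for `j < K` and
`e K = (1/√K) ∑ i, b i`. Then the `K+1` vectors of `E ⊕ ℂ` given by `ee j = (e j, 1/√K)` for
`j < K` and `ee K = (e K, 0)` form an orthonormal basis of `E ⊕ ℂ`; in particular `(e j)` is
a Parseval frame of `E` (with complementary Parseval frame `1/√K, …, 1/√K, 0` in `ℂ`).
(The paper's inner product `(f, g)`, linear in the first argument, is `⟪g, f⟫_ℂ`.) -/
theorem statement10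
    {E : Type*} [NormedAddCommGroup E] [InnerProductSpace ℂ E]
    (K : ℕ) (hK : 1 ≤ K) (b : OrthonormalBasis (Fin K) ℂ E)
    (e : Fin (K + 1) → E)
    (he : ∀ j : Fin K, e j.castSucc = b j - ((K : ℂ))⁻¹ • ∑ i, b i)
    (heL : e (Fin.last K) = ((Real.sqrt K : ℂ))⁻¹ • ∑ i, b i)
    (ee : Fin (K + 1) → WithLp 2 (E × ℂ))
    (hee : ∀ j : Fin K,
      ee j.castSucc = (WithLp.equiv 2 (E × ℂ)).symm (e j.castSucc, ((Real.sqrt K : ℂ))⁻¹))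
    (heeL : ee (Fin.last K) = (WithLp.equiv 2 (E × ℂ)).symm (e (Fin.last K), 0)) :
    Orthonormal ℂ ee ∧ Submodule.span ℂ (Set.range ee) = ⊤ ∧
    ∀ f : E, ∑ j, ‖⟪e j, f⟫_ℂ‖ ^ 2 = ‖f‖ ^ 2 := by
  have hb := b.orthonormal
  have : Nonempty (Fin K) := ⟨⟨0, hK⟩⟩
  have hee_self : ∀ i j : Fin K,
      ⟪e i.castSucc, e j.castSucc⟫_ℂ = (if i = j then 1 else 0) - (K : ℂ)⁻¹ := fun i j => by
    rw [he, he]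
    simpa only [Fintype.card_fin] using hb.inner_sub_average_sub_average i j
  have hee_last : ∀ i : Fin K, ⟪e i.castSucc, e (Fin.last K)⟫_ℂ = 0 := fun i => by
    rw [he, heL, inner_smul_right, mul_eq_zero]
    simpa only [Fintype.card_fin] using Or.inr (hb.inner_sub_average_sum i)
  -- `exact`, not `simpa`: `RCLike.ofReal` is only definitionally the coercion `ℝ → ℂ`.
  have hlast : ⟪e (Fin.last K), e (Fin.last K)⟫_ℂ = 1 := by
    have h := hb.inner_inv_sqrt_card_smul_sum
    rw [Fintype.card_fin] at h
    rw [heL]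
    exact h
  have hsqrt : ⟪((√K : ℝ) : ℂ)⁻¹, ((√K : ℝ) : ℂ)⁻¹⟫_ℂ = (K : ℂ)⁻¹ :=
    RCLike.inner_inv_sqrt_natCast_self K
  have hon : Orthonormal ℂ ee := by
    rw [orthonormal_iff_ite]
    intro i j
    induction i using Fin.lastCases <;> induction j using Fin.lastCases <;>
      simp only [hee, heeL, WithLp.prod_inner_apply, WithLp.equiv_symm_apply,
        hee_self, hee_last, inner_eq_zero_symm.mp (hee_last _), hlast, hsqrt, inner_zero_left,
        inner_zero_right, add_zero, sub_add_cancel, Fin.castSucc_inj, Fin.castSucc_ne_last,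
        (Fin.castSucc_ne_last _).symm, if_true, if_false]
  have hspan : Submodule.span ℂ (Set.range ee) = ⊤ := by
    refine hon.linearIndependent.span_eq_top_of_card_eq_finrank ?_
    simp [Module.finrank_eq_card_basis (b.prod (OrthonormalBasis.singleton Unit ℂ)).toBasis]
  have hfst : ∀ j, (ee j).fst = e j := Fin.lastCases (by simp [heeL]) (by simp [hee])
  refine ⟨hon, hspan, fun f => ?_⟩
  simpa [hfst] using (OrthonormalBasis.mk hon hspan.ge).sum_sq_norm_inner_fst f
end

section
/- Let (𝐛_i)_{i=1}^{K} be an orthonormal basis of a K-dimensional complex Hilbert space K (K ≥ 1), and define the Parseval frame e_j := 𝐛_j − (1/K) ∑_{i=1}^{K} 𝐛_i for 1 ≤ j ≤ K and e_{K+1} := (1/√K) ∑_{i=1}^{K} 𝐛_i. Let u ∈ K be a unit vector and ε ∈ (0, 1]. Then the family (ψ_j)_{j=1}^{K+1} defined by ψ_j := e_j + (1/ε)·√((1−ε²)/K)·u for 1 ≤ j ≤ K and ψ_{K+1} := e_{K+1} is a dual frame of (e_j)_{j=1}^{K+1}: it is a frame of K and f = ∑_{j=1}^{K+1} ⟨f,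 ψ_j⟩ e_j for all f ∈ K. -/
/-!
The first `K` vectors of the Casazza–Christensen frame sum to zero, so adding one and the same
multiple of `u` to each of them does not change the synthesis `∑ ⟪ψ j, f⟫ e j`; since the
frame is Parseval, `ψ` is therefore a dual of it. Any finite family admitting such a
reconstruction formula is a frame: Cauchy–Schwarz gives the upper bound `∑ ‖ψ j‖²`, and
applied to `f = ∑ ⟪ψ j, f⟫ e j` it gives `‖f‖² ≤ (∑ ‖e j‖²) ∑ ‖⟪ψ j, f⟫‖²`.
-/

open scoped InnerProductSpace
open Finset

section Reconstruction

variable {𝕜 E ι : Type*} [RCLike 𝕜] [NormedAddCommGroup E] [InnerProductSpace 𝕜 E] [Fintype ι]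

theorem sum_norm_inner_sq_le (ψ : ι → E) (f : E) :
    ∑ j, ‖⟪ψ j, f⟫_𝕜‖ ^ 2 ≤ (∑ j, ‖ψ j‖ ^ 2) * ‖f‖ ^ 2 := by
  rw [sum_mul]
  gcongr with j
  rw [← mul_pow]
  gcongr
  exact norm_inner_le_norm _ _

theorem norm_sq_le_of_sum_inner_smul_eq {ψ e : ι → E} {f : E}
    (hf : ∑ j, ⟪ψ j, f⟫_𝕜 • e j = f) :
    ‖f‖ ^ 2 ≤ (∑ j, ‖e j‖ ^ 2) * ∑ j, ‖⟪ψ j, f⟫_𝕜‖ ^ 2 :=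
  calc ‖f‖ ^ 2 = ‖∑ j, ⟪ψ j, f⟫_𝕜 • e j‖ ^ 2 := by rw [hf]
    _ ≤ (∑ j, ‖⟪ψ j, f⟫_𝕜‖ * ‖e j‖) ^ 2 := by
      simp only [← norm_smul]
      gcongr
      exact norm_sum_le _ _
    _ ≤ (∑ j, ‖⟪ψ j, f⟫_𝕜‖ ^ 2) * ∑ j, ‖e j‖ ^ 2 := sum_mul_sq_le_sq_mul_sq _ _ _
    _ = (∑ j, ‖e j‖ ^ 2) * ∑ j, ‖⟪ψ j, f⟫_𝕜‖ ^ 2 := mul_comm _ _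

theorem exists_frame_bounds_of_sum_inner_smul_eq {ψ e : ι → E}
    (h : ∀ f, ∑ j, ⟪ψ j, f⟫_𝕜 • e j = f) :
    ∃ A B : ℝ, 0 < A ∧ A ≤ B ∧ ∀ f : E,
      A * ‖f‖ ^ 2 ≤ ∑ j, ‖⟪ψ j, f⟫_𝕜‖ ^ 2 ∧ ∑ j, ‖⟪ψ j, f⟫_𝕜‖ ^ 2 ≤ B * ‖f‖ ^ 2 := by
  set C := ∑ j, ‖e j‖ ^ 2
  set D := ∑ j, ‖ψ j‖ ^ 2
  -- `C + 1` rather than `C`, which vanishes when `E` is trivial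
  have hC : 0 < C + 1 := by positivity
  refine ⟨(C + 1)⁻¹, (C + 1)⁻¹ + D, by positivity, by simp [D]; positivity,
    fun f => ⟨?_, ?_⟩⟩
  · rw [inv_mul_le_iff₀ hC]
    have hS : 0 ≤ ∑ j, ‖⟪ψ j, f⟫_𝕜‖ ^ 2 := by positivity
    nlinarith [norm_sq_le_of_sum_inner_smul_eq (h f)]
  · nlinarith [sum_norm_inner_sq_le (𝕜 := 𝕜) ψ f, sq_nonneg ‖f‖, inv_pos.mpr hC]

theorem sum_inner_add_smul_smul_of_sum_eq_zero {e : ι → E} (he : ∑ j, e j = 0)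
    (φ : ι → E) (c : 𝕜) (u f : E) :
    ∑ j, ⟪φ j + c • u, f⟫_𝕜 • e j = ∑ j, ⟪φ j, f⟫_𝕜 • e j := by
  simp only [inner_add_left, add_smul, sum_add_distrib, ← smul_sum, he, smul_zero, add_zero]

end Reconstruction

section CasazzaChristensen

variable {𝕜 E : Type*} [RCLike 𝕜] [NormedAddCommGroup E] [InnerProductSpace 𝕜 E] {K : ℕ}

noncomputable def casazzaChristensenFrame (b : OrthonormalBasis (Fin K) 𝕜 E) :
    Fin (K + 1) → E :=
  Fin.lastCases (((√K : ℝ) : 𝕜)⁻¹ • ∑ i, b i) fun j => b j - (K : 𝕜)⁻¹ • ∑ i, b i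

variable (b : OrthonormalBasis (Fin K) 𝕜 E)

@[simp]
theorem casazzaChristensenFrame_castSucc (j : Fin K) :
    casazzaChristensenFrame b j.castSucc = b j - (K : 𝕜)⁻¹ • ∑ i, b i := by
  simp [casazzaChristensenFrame]

@[simp]
theorem casazzaChristensenFrame_last :
    casazzaChristensenFrame b (Fin.last K) = ((√K : ℝ) : 𝕜)⁻¹ • ∑ i, b i := by
  simp [casazzaChristensenFrame]

theorem sum_casazzaChristensenFrame_castSucc :
    ∑ j : Fin K, casazzaChristensenFrame b j.castSucc = 0 := by
  rcases Nat.eq_zero_or_pos K with rfl | hK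
  · simp
  · have hK : (K : 𝕜) ≠ 0 := Nat.cast_ne_zero.mpr hK.ne'
    simp [sum_sub_distrib, ← Nat.cast_smul_eq_nsmul 𝕜, smul_smul, mul_inv_cancel₀ hK]

theorem sum_inner_casazzaChristensenFrame_smul (f : E) :
    ∑ j, ⟪casazzaChristensenFrame b j, f⟫_𝕜 • casazzaChristensenFrame b j = f := by
  set s := ∑ i, b i with hs
  set e := casazzaChristensenFrame b
  have hcoef : ∑ j : Fin K, ⟪e j.castSucc, f⟫_𝕜 = 0 := by
    rw [← sum_inner, sum_casazzaChristensenFrame_castSucc, inner_zero_left]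
  have hfirst : ∑ j : Fin K, ⟪e j.castSucc, f⟫_𝕜 • e j.castSucc
      = f - (K : 𝕜)⁻¹ • ⟪s, f⟫_𝕜 • s := by
    calc ∑ j : Fin K, ⟪e j.castSucc, f⟫_𝕜 • e j.castSucc
        = ∑ j, ⟪e j.castSucc, f⟫_𝕜 • (b j - (K : 𝕜)⁻¹ • s) := by
          simp only [e, casazzaChristensenFrame_castSucc, ← hs]
      _ = ∑ j, ⟪e j.castSucc, f⟫_𝕜 • b j := by
          simp only [smul_sub, sum_sub_distrib, ← sum_smul, hcoef, zero_smul, sub_zero]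
      _ = f - (K : 𝕜)⁻¹ • ⟪s, f⟫_𝕜 • s := by
          simp only [e, casazzaChristensenFrame_castSucc, ← hs, inner_sub_left, inner_smul_left,
            map_inv₀, map_natCast, sub_smul, sum_sub_distrib, b.sum_repr', ← smul_sum,
            smul_smul]
  have hlast : ⟪e (Fin.last K), f⟫_𝕜 • e (Fin.last K) = (K : 𝕜)⁻¹ • ⟪s, f⟫_𝕜 • s := by
    have hsqrt : ((√K : ℝ) : 𝕜)⁻¹ * ((√K : ℝ) : 𝕜)⁻¹ = (K : 𝕜)⁻¹ := by
      rw [← mul_inv, ← RCLike.ofReal_mul, Real.mul_self_sqrt K.cast_nonneg, RCLike.ofReal_natCast]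
    simp only [e, casazzaChristensenFrame_last, ← hs, inner_smul_left, map_inv₀,
      RCLike.conj_ofReal, smul_smul]
    rw [mul_comm, ← mul_assoc, hsqrt]
  rw [Fin.sum_univ_castSucc, hfirst, hlast, sub_add_cancel]

end CasazzaChristensen

theorem statement11_general
    {E : Type*} [NormedAddCommGroup E] [InnerProductSpace ℂ E]
    (K : ℕ) (b : OrthonormalBasis (Fin K) ℂ E)
    (e : Fin (K + 1) → E)
    (he : ∀ j : Fin K, e j.castSucc = b j - ((K : ℂ))⁻¹ • ∑ i, b i)
    (heL : e (Fin.last K) = ((Real.sqrt K : ℂ))⁻¹ • ∑ i, b i)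
    (u : E) (ε : ℝ)
    (ψ : Fin (K + 1) → E)
    (hψ : ∀ j : Fin K,
      ψ j.castSucc = e j.castSucc + ((ε⁻¹ * Real.sqrt ((1 - ε ^ 2) / K) : ℝ) : ℂ) • u)
    (hψL : ψ (Fin.last K) = e (Fin.last K)) :
    (∃ A B : ℝ, 0 < A ∧ A ≤ B ∧ ∀ f : E,
      A * ‖f‖ ^ 2 ≤ ∑ j, ‖⟪ψ j, f⟫_ℂ‖ ^ 2 ∧ ∑ j, ‖⟪ψ j, f⟫_ℂ‖ ^ 2 ≤ B * ‖f‖ ^ 2) ∧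
    ∀ f : E, ∑ j, ⟪ψ j, f⟫_ℂ • e j = f := by
  obtain rfl : e = casazzaChristensenFrame b :=
    funext <| Fin.lastCases (by simpa using heL) fun j => by simpa using he j
  have hdual : ∀ f : E, ∑ j, ⟪ψ j, f⟫_ℂ • casazzaChristensenFrame b j = f := by
    intro f
    rw [Fin.sum_univ_castSucc, hψL]
    simp only [hψ]
    rw [sum_inner_add_smul_smul_of_sum_eq_zero (sum_casazzaChristensenFrame_castSucc b)]
    exact (Fin.sum_univ_castSucc _).symm.trans (sum_inner_casazzaChristensenFrame_smul b f)
  exact ⟨exists_frame_bounds_of_sum_inner_smul_eq hdual, hdual⟩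

/-- Let `(b i)` be an orthonormal basis of a `K`-dimensional complex Hilbert
space `E` (`K ≥ 1`) and let `e j = b j − (1/K) ∑ i, b i` (`j < K`),
`e K = (1/√K) ∑ i, b i` be the finite Casazza–Christensen Parseval frame. Let `u` be a unit
vector and `ε ∈ (0,1]`. Then `ψ j = e j + (1/ε)·√((1−ε²)/K)·u` (`j < K`), `ψ K = e K` is a
dual frame of `(e j)`: it is a frame of `E` and `f = ∑ j, ⟨f, ψ_j⟩ e_j` for all `f`.
(The paper's inner product `(f, g)`, linear in the first argument, is `⟪g, f⟫_ℂ`.) -/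
theorem statement11
    {E : Type*} [NormedAddCommGroup E] [InnerProductSpace ℂ E]
    (K : ℕ) (hK : 1 ≤ K) (b : OrthonormalBasis (Fin K) ℂ E)
    (e : Fin (K + 1) → E)
    (he : ∀ j : Fin K, e j.castSucc = b j - ((K : ℂ))⁻¹ • ∑ i, b i)
    (heL : e (Fin.last K) = ((Real.sqrt K : ℂ))⁻¹ • ∑ i, b i)
    (u : E) (hu : ‖u‖ = 1) (ε : ℝ) (hε0 : 0 < ε) (hε1 : ε ≤ 1)
    (ψ : Fin (K + 1) → E)
    (hψ : ∀ j : Fin K,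
      ψ j.castSucc = e j.castSucc + ((ε⁻¹ * Real.sqrt ((1 - ε ^ 2) / K) : ℝ) : ℂ) • u)
    (hψL : ψ (Fin.last K) = e (Fin.last K)) :
    (∃ A B : ℝ, 0 < A ∧ A ≤ B ∧ ∀ f : E,
      A * ‖f‖ ^ 2 ≤ ∑ j, ‖⟪ψ j, f⟫_ℂ‖ ^ 2 ∧ ∑ j, ‖⟪ψ j, f⟫_ℂ‖ ^ 2 ≤ B * ‖f‖ ^ 2) ∧
    ∀ f : E, ∑ j, ⟪ψ j, f⟫_ℂ • e j = f :=
  statement11_general K b e he heL u ε ψ hψ hψL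
end

section
/- Let (e_j)_{j∈J} be a Parseval frame in a complex Hilbert space K with J = J₀ ⊔ J₁ where J₁ is finite, let (b_j)_{j∈J₀} be an orthonormal basis of K and T a bounded positive operator on K with bounded inverse such that e_j = T b_j for all j ∈ J₀ (so that T ≤ I and T⁻² − I ≥ 0). Then the family of vectors 𝐞_j := (e_j, (T⁻² − I)^{1/2} e_j) ∈ K ⊕ K, j ∈ J₀, is orthonormal: ⟨e_j, e_k⟩ + ⟨(T⁻² − I)^{1/2} e_j, (T⁻² − I)^{1/2} e_k⟩ = δ_{jk} for all j, k ∈ J₀. -/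
open scoped InnerProductSpace

/-! For `j ∈ J₀` write `e j = T (b j)`. Since `R² = T⁻² − 1` and `R`, `T` are symmetric,
`⟪T x, T y⟫ + ⟪R T x, R T y⟫ = ⟪T x, T⁻² T y⟫ = ⟪T x, T⁻¹ y⟫ = ⟪x, y⟫`,
so the family inherits orthonormality from the basis `b`. -/

namespace ContinuousLinearMap

variable {𝕜 E : Type*} [RCLike 𝕜] [NormedAddCommGroup E] [InnerProductSpace 𝕜 E]

theorem inner_add_inner_sqrt_inv_sq_sub_one_apply {T Tinv R : E →L[𝕜] E}
    (hT : (T : E →ₗ[𝕜] E).IsSymmetric) (hR : (R : E →ₗ[𝕜] E).IsSymmetric)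
    (hTinv₁ : T ∘L Tinv = 1) (hTinv₂ : Tinv ∘L T = 1) (hR2 : R ∘L R = Tinv ∘L Tinv - 1)
    (x y : E) :
    ⟪T x, T y⟫_𝕜 + ⟪R (T x), R (T y)⟫_𝕜 = ⟪x, y⟫_𝕜 := by
  have hRR : R (R (T y)) = Tinv (Tinv (T y)) - T y := by
    simpa using congr($hR2 (T y))
  have hTinvT : Tinv (T y) = y := by simpa using congr($hTinv₂ y)
  have hTTinv : T (Tinv y) = y := by simpa using congr($hTinv₁ y)
  calc ⟪T x, T y⟫_𝕜 + ⟪R (T x), R (T y)⟫_𝕜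
      = ⟪T x, T y⟫_𝕜 + ⟪T x, R (R (T y))⟫_𝕜 := by rw [← coe_coe R, hR]
    _ = ⟪T x, Tinv y⟫_𝕜 := by rw [hRR, inner_sub_right, hTinvT]; ring
    _ = ⟪x, T (Tinv y)⟫_𝕜 := hT x (Tinv y)
    _ = ⟪x, y⟫_𝕜 := by rw [hTTinv]

end ContinuousLinearMap

theorem statement14_general
    {K : Type*} [NormedAddCommGroup K] [InnerProductSpace ℂ K]
    {J₀ J₁ : Type*} [DecidableEq J₀]
    (e : J₀ ⊕ J₁ → K)
    (b : HilbertBasis J₀ ℂ K)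
    (T Tinv : K →L[ℂ] K) (hT : T.IsPositive)
    (hTinv₁ : T ∘L Tinv = 1) (hTinv₂ : Tinv ∘L T = 1)
    (he : ∀ j : J₀, e (Sum.inl j) = T (b j))
    (R : K →L[ℂ] K) (hR : R.IsPositive) (hR2 : R ∘L R = Tinv ∘L Tinv - 1) :
    ∀ j k : J₀,
      ⟪e (Sum.inl j), e (Sum.inl k)⟫_ℂ + ⟪R (e (Sum.inl j)), R (e (Sum.inl k))⟫_ℂ =
        if j = k then 1 else 0 := by
  intro j k
  rw [he, he, ContinuousLinearMap.inner_add_inner_sqrt_inv_sq_sub_one_apply hT.isSymmetric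
    hR.isSymmetric hTinv₁ hTinv₂ hR2]
  exact orthonormal_iff_ite.mp b.orthonormal j k

/-- Let `(e j)`, `j ∈ J₀ ⊔ J₁` with `J₁` finite, be a Parseval frame in a
complex Hilbert space `K`, `(b j)` (`j ∈ J₀`) an orthonormal basis of `K`, and `T` a bounded
positive operator with bounded inverse `Tinv` such that `e j = T (b j)` for `j ∈ J₀`. Let
`R = (T⁻² − I)^{1/2}` be the positive square root of `T⁻² − I`. Then the family
`(e j, R (e j)) ∈ K ⊕ K`, `j ∈ J₀`, is orthonormal with respect to the inner product
`⟨(f₁,g₁),(f₂,g₂)⟩ = ⟨f₁,f₂⟩ + ⟨g₁,g₂⟩`. -/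
theorem statement14
    {K : Type*} [NormedAddCommGroup K] [InnerProductSpace ℂ K] [CompleteSpace K]
    {J₀ J₁ : Type*} [Countable J₀] [Fintype J₁] [DecidableEq J₀]
    (e : J₀ ⊕ J₁ → K)
    (hPar : ∀ f : K, HasSum (fun j => ‖⟪e j, f⟫_ℂ‖ ^ 2) (‖f‖ ^ 2))
    (b : HilbertBasis J₀ ℂ K)
    (T Tinv : K →L[ℂ] K) (hT : T.IsPositive)
    (hTinv₁ : T ∘L Tinv = 1) (hTinv₂ : Tinv ∘L T = 1)
    (he : ∀ j : J₀, e (Sum.inl j) = T (b j))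
    (R : K →L[ℂ] K) (hR : R.IsPositive) (hR2 : R ∘L R = Tinv ∘L Tinv - 1) :
    ∀ j k : J₀,
      ⟪e (Sum.inl j), e (Sum.inl k)⟫_ℂ + ⟪R (e (Sum.inl j)), R (e (Sum.inl k))⟫_ℂ =
        if j = k then 1 else 0 :=
  statement14_general e b T Tinv hT hTinv₁ hTinv₂ he R hR hR2
end

section
/- Let (e_j)_{j∈J} be a Parseval frame in a complex Hilbert space K with J = J₀ ⊔ J₁ where J₁ is finite, let (b_j)_{j∈J₀} be an orthonormal basis of K and T a bounded positive operator on K with bounded inverse such that e_j = T b_j for all j ∈ J₀, and let M₁ := span{e_j : j ∈ J₁} (a finite-dimensional subspace equal to the range of I − T²). In the Hilbert space H′ := K ⊕ M₁, let L₀ be the closed subspace spanned by the orthonormal family 𝐞_j := (e_j, (T⁻² − I)^{1/2} e_j), j ∈ J₀. Then the orthogonal complement of L₀ in H′ equals { (−(T⁻² − I)^{1/2} r, r) : r ∈ M₁ }. -/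
open scoped InnerProductSpace

/-!
Since `R` is symmetric, `⟪e j, f⟫ + ⟪R (e j), g⟫ = ⟪T (b j), f + R g⟫`, and since `T` is symmetric
this is `⟪b j, T (f + R g)⟫`. These coefficients all vanish iff `T (f + R g) = 0`, i.e. iff
`f = -R g`, because `T` is injective.
-/

namespace HilbertBasis

variable {ι 𝕜 E : Type*} [RCLike 𝕜] [NormedAddCommGroup E] [InnerProductSpace 𝕜 E]

theorem eq_zero_of_forall_inner_eq_zero (b : HilbertBasis ι 𝕜 E) {x : E}
    (h : ∀ i, ⟪b i, x⟫_𝕜 = 0) : x = 0 := by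
  have hrepr : b.repr x = 0 := by
    ext i
    simpa [b.repr_apply_apply] using h i
  simpa using hrepr

theorem forall_inner_map_eq_zero_iff (b : HilbertBasis ι 𝕜 E) {T : E →ₗ[𝕜] E}
    (hT : T.IsSymmetric) (hTinj : Function.Injective T) (x : E) :
    (∀ i, ⟪T (b i), x⟫_𝕜 = 0) ↔ x = 0 := by
  refine ⟨fun h => ?_, by rintro rfl i; exact inner_zero_right _⟩
  refine hTinj ?_
  rw [map_zero]
  exact b.eq_zero_of_forall_inner_eq_zero fun i => hT (b i) x ▸ h i

theorem forall_inner_add_inner_map_eq_zero_iff (b : HilbertBasis ι 𝕜 E)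
    {T R : E →ₗ[𝕜] E} (hT : T.IsSymmetric) (hTinj : Function.Injective T) (hR : R.IsSymmetric)
    (f g : E) :
    (∀ i, ⟪T (b i), f⟫_𝕜 + ⟪R (T (b i)), g⟫_𝕜 = 0) ↔ f = -R g := by
  simp only [hR _ g, ← inner_add_right]
  rw [b.forall_inner_map_eq_zero_iff hT hTinj, add_eq_zero_iff_eq_neg]

end HilbertBasis

theorem statement15_general
    {K : Type*} [NormedAddCommGroup K] [InnerProductSpace ℂ K]
    {J₀ J₁ : Type*}
    (e : J₀ ⊕ J₁ → K)
    (b : HilbertBasis J₀ ℂ K)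
    (T Tinv : K →L[ℂ] K) (hT : T.IsPositive)
    (hTinv₂ : Tinv ∘L T = 1)
    (he : ∀ j : J₀, e (Sum.inl j) = T (b j))
    (R : K →L[ℂ] K) (hR : R.IsPositive)
    (M₁ : Submodule ℂ K) :
    ∀ f g : K, g ∈ M₁ →
      ((∀ j : J₀, ⟪e (Sum.inl j), f⟫_ℂ + ⟪R (e (Sum.inl j)), g⟫_ℂ = 0) ↔
        ∃ r ∈ M₁, f = -(R r) ∧ g = r) := by
  intro f g hg
  have hTinj : Function.Injective T :=
    Function.LeftInverse.injective fun x => congr($hTinv₂ x)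
  simp only [he]
  refine (b.forall_inner_add_inner_map_eq_zero_iff (T := T) (R := R) hT.isSymmetric hTinj
    hR.isSymmetric f g).trans ⟨fun hf => ⟨g, hg, hf, rfl⟩, ?_⟩
  rintro ⟨r, -, hf, rfl⟩
  exact hf

/-- Near-Riesz basis setting: `(e j)`, `j ∈ J₀ ⊔ J₁` with `J₁` finite, is a
Parseval frame in `K`, `(b j)` an orthonormal basis with `e j = T (b j)` for `j ∈ J₀` (`T`
positive with bounded inverse `Tinv`), `M₁ = span{e_j : j ∈ J₁}`, and
`R = (T⁻² − I)^{1/2}`. In `H′ = K ⊕ M₁`, a vector `(f, g)` (with `g ∈ M₁`) lies in the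
orthogonal complement of the closed subspace `L₀` spanned by the orthonormal family
`(e j, R (e j))`, `j ∈ J₀` — equivalently, it is orthogonal to each of these generators —
iff `(f, g) = (−R r, r)` for some `r ∈ M₁`. -/
theorem statement15
    {K : Type*} [NormedAddCommGroup K] [InnerProductSpace ℂ K] [CompleteSpace K]
    {J₀ J₁ : Type*} [Countable J₀] [Fintype J₁]
    (e : J₀ ⊕ J₁ → K)
    (hPar : ∀ f : K, HasSum (fun j => ‖⟪e j, f⟫_ℂ‖ ^ 2) (‖f‖ ^ 2))
    (b : HilbertBasis J₀ ℂ K)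
    (T Tinv : K →L[ℂ] K) (hT : T.IsPositive)
    (hTinv₁ : T ∘L Tinv = 1) (hTinv₂ : Tinv ∘L T = 1)
    (he : ∀ j : J₀, e (Sum.inl j) = T (b j))
    (R : K →L[ℂ] K) (hR : R.IsPositive) (hR2 : R ∘L R = Tinv ∘L Tinv - 1)
    (M₁ : Submodule ℂ K)
    (hM₁ : M₁ = Submodule.span ℂ (Set.range fun j : J₁ => e (Sum.inr j))) :
    ∀ f g : K, g ∈ M₁ →
      ((∀ j : J₀, ⟪e (Sum.inl j), f⟫_ℂ + ⟪R (e (Sum.inl j)), g⟫_ℂ = 0) ↔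
        ∃ r ∈ M₁, f = -(R r) ∧ g = r) :=
  statement15_general e b T Tinv hT hTinv₂ he R hR M₁
end

section
/- Let (e_j)_{j∈J} be a Parseval frame in a complex Hilbert space K with J = J₀ ⊔ J₁ where J₁ is finite, let (b_j)_{j∈J₀} be an orthonormal basis of K and T a bounded positive operator on K with bounded inverse such that e_j = T b_j for all j ∈ J₀, and let M₁ := span{e_j : j ∈ J₁}. Then for each j ∈ J₁ there is a unique s_j ∈ M₁ with (T⁻² − I)^{1/2} s_j = e_j, and the family in K ⊕ M₁ consisting of the vectors (e_j, (T⁻² − I)^{1/2} e_j) for j ∈ J₀ together with the vectors (e_j, −s_j) for j ∈ J₁ is a Parseval frame of K ⊕ M₁. -/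
/-!
Comparing the Parseval identity of `(e j)` with that of the orthonormal basis `(b j)` shows
`∑_{j ∈ J₁} |⟪e j, f⟫|² = ‖f‖² - ‖T f‖²`. Hence `T` is a contraction and `M₁ᗮ` is the set where
`‖T f‖ = ‖f‖`, i.e. where `T² f = f`, i.e. (as `R² = T⁻² - 1`) the kernel of `R`. Being
self-adjoint, `R` then maps the finite-dimensional space `M₁` injectively, hence bijectively,
to itself. For `g = R h` with `h ∈ M₁`, the `J₀`-coefficients of `(f, g)` are the coefficients of
`T f + T R² h = T (f - h) + T⁻¹ h` in the basis `b`, and the `J₁`-coefficients are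
`⟪e j, f - h⟫`; expanding the squares gives `‖f‖² + ‖g‖²`.
-/

open scoped InnerProductSpace
open RCLike

section

variable {𝕜 E : Type*} [RCLike 𝕜] [NormedAddCommGroup E] [InnerProductSpace 𝕜 E]

theorem HilbertBasis.hasSum_norm_inner_sq_s16 {ι : Type*} (b : HilbertBasis ι 𝕜 E) (x : E) :
    HasSum (fun i => ‖⟪b i, x⟫_𝕜‖ ^ 2) (‖x‖ ^ 2) := by
  simpa [b.repr_apply_apply] using lp.hasSum_norm (p := 2) (by norm_num) (b.repr x)

namespace LinearMap.IsSymmetric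

variable {T : E →ₗ[𝕜] E}

theorem re_inner_apply_apply_self (hT : T.IsSymmetric) (v : E) :
    re ⟪T (T v), v⟫_𝕜 = ‖T v‖ ^ 2 := by
  rw [hT, inner_self_eq_norm_sq]

theorem apply_eq_zero_of_apply_apply_eq_zero (hT : T.IsSymmetric) {v : E} (h : T (T v) = 0) :
    T v = 0 := by
  rw [← norm_eq_zero, ← sq_eq_zero_iff, ← hT.re_inner_apply_apply_self, h, inner_zero_left,
    map_zero]

theorem apply_apply_eq_self_iff_norm_eq (hT : T.IsSymmetric) (hc : ∀ x, ‖T x‖ ≤ ‖x‖) (v : E) :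
    T (T v) = v ↔ ‖T v‖ = ‖v‖ := by
  have hre := hT.re_inner_apply_apply_self v
  constructor
  · intro h
    rw [h, inner_self_eq_norm_sq] at hre
    exact ((pow_left_inj₀ (norm_nonneg _) (norm_nonneg _) two_ne_zero).mp hre).symm
  · intro h
    -- `‖T² v - v‖² = ‖T² v‖² - 2 ‖T v‖² + ‖v‖² ≤ ‖v‖² - ‖T v‖² = 0`
    have hTT := pow_le_pow_left₀ (norm_nonneg _) (hc (T v)) 2
    have : ‖T (T v) - v‖ ^ 2 ≤ 0 := by
      rw [norm_sub_sq (𝕜 := 𝕜), hre, ← h]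
      linarith
    rw [← sub_eq_zero, ← norm_eq_zero, ← sq_eq_zero_iff]
    exact le_antisymm this (sq_nonneg _)

theorem of_leftInverse (hT : T.IsSymmetric) {S : E →ₗ[𝕜] E} (hTS : Function.LeftInverse T S) :
    S.IsSymmetric := fun x y => by
  conv_lhs => rw [← hTS y, ← hT, hTS]

theorem existsUnique_mem_apply_eq (hT : T.IsSymmetric) {M : Submodule 𝕜 E}
    [FiniteDimensional 𝕜 M] (hker : LinearMap.ker T = Mᗮ) {y : E} (hy : y ∈ M) :
    ∃! x, x ∈ M ∧ T x = y := by
  have hmaps : ∀ x ∈ M, T x ∈ M := fun x _ => by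
    rw [← M.orthogonal_orthogonal, ← hker, ← hT.orthogonal_range]
    exact Submodule.le_orthogonal_orthogonal _ (LinearMap.mem_range_self T x)
  have hinj : Function.Injective (T.restrict hmaps) :=
    (LinearMap.injective_restrict_iff hmaps).mpr (hker ▸ M.orthogonal_disjoint)
  have hbij : Function.Bijective (T.restrict hmaps) :=
    ⟨hinj, LinearMap.injective_iff_surjective.mp hinj⟩
  obtain ⟨⟨x, hx⟩, hTx, huniq⟩ := hbij.existsUnique ⟨y, hy⟩
  exact ⟨x, ⟨hx, congrArg Subtype.val hTx⟩,
    fun x' ⟨hx', hTx'⟩ => congrArg Subtype.val (huniq ⟨x', hx'⟩ (Subtype.ext hTx'))⟩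

end LinearMap.IsSymmetric

section DefectFamily

variable {ι : Type*} [Fintype ι] {u : ι → E} {T : E →ₗ[𝕜] E}

theorem norm_apply_le_of_sum_eq (hu : ∀ f, ∑ i, ‖⟪u i, f⟫_𝕜‖ ^ 2 = ‖f‖ ^ 2 - ‖T f‖ ^ 2) (f : E) :
    ‖T f‖ ≤ ‖f‖ := by
  have := hu f ▸ Finset.sum_nonneg fun i _ => sq_nonneg ‖⟪u i, f⟫_𝕜‖
  exact (pow_le_pow_iff_left₀ (norm_nonneg _) (norm_nonneg _) two_ne_zero).mp (sub_nonneg.mp this)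

theorem mem_orthogonal_span_iff_norm_apply_eq
    (hu : ∀ f, ∑ i, ‖⟪u i, f⟫_𝕜‖ ^ 2 = ‖f‖ ^ 2 - ‖T f‖ ^ 2) (v : E) :
    v ∈ (Submodule.span 𝕜 (Set.range u))ᗮ ↔ ‖T v‖ = ‖v‖ := by
  have hsum : (∀ i, ⟪u i, v⟫_𝕜 = 0) ↔ ∑ i, ‖⟪u i, v⟫_𝕜‖ ^ 2 = 0 := by
    simp [Finset.sum_eq_zero_iff_of_nonneg]
  rw [← Submodule.span_singleton_le_iff_mem, ← Submodule.isOrtho_iff_le, Submodule.isOrtho_comm]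
  simp only [Submodule.isOrtho_span, Set.forall_mem_range, Set.mem_singleton_iff, forall_eq]
  rw [hsum, hu, sub_eq_zero, pow_left_inj₀ (norm_nonneg _) (norm_nonneg _) two_ne_zero, eq_comm]

theorem ker_eq_orthogonal_span_of_mul_self_eq {R S : E →ₗ[𝕜] E} (hR : R.IsSymmetric)
    (hT : T.IsSymmetric) (hTS : Function.LeftInverse T S) (hST : Function.LeftInverse S T)
    (hR2 : ∀ x, R (R x) = S (S x) - x)
    (hu : ∀ f, ∑ i, ‖⟪u i, f⟫_𝕜‖ ^ 2 = ‖f‖ ^ 2 - ‖T f‖ ^ 2) :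
    LinearMap.ker R = (Submodule.span 𝕜 (Set.range u))ᗮ := by
  ext v
  rw [LinearMap.mem_ker, mem_orthogonal_span_iff_norm_apply_eq hu,
    ← hT.apply_apply_eq_self_iff_norm_eq (norm_apply_le_of_sum_eq hu)]
  calc R v = 0 ↔ R (R v) = 0 :=
        ⟨fun h => by rw [h, map_zero], hR.apply_eq_zero_of_apply_apply_eq_zero⟩
    _ ↔ S (S v) = v := by rw [hR2, sub_eq_zero]
    _ ↔ T (T v) = v := ⟨fun h => by rw [← h, hTS, hTS, h], fun h => by rw [← h, hST, hST, h]⟩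

end DefectFamily

theorem norm_sq_add_defect_eq {R S T : E →ₗ[𝕜] E} (hR : R.IsSymmetric) (hT : T.IsSymmetric)
    (hTS : Function.LeftInverse T S) (hR2 : ∀ x, R (R x) = S (S x) - x) (f h : E) :
    ‖T f + T (R (R h))‖ ^ 2 + (‖f - h‖ ^ 2 - ‖T (f - h)‖ ^ 2) = ‖f‖ ^ 2 + ‖R h‖ ^ 2 := by
  have hu : T f + T (R (R h)) = T (f - h) + S h := by
    rw [hR2, map_sub, hTS, map_sub]
    abel
  have hcross : re ⟪T (f - h), S h⟫_𝕜 = re ⟪f - h, h⟫_𝕜 := by rw [hT, hTS]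
  have hRh : ‖R h‖ ^ 2 = ‖S h‖ ^ 2 - ‖h‖ ^ 2 := by
    rw [← hR.re_inner_apply_apply_self, hR2, inner_sub_left, map_sub,
      (hT.of_leftInverse hTS).re_inner_apply_apply_self, inner_self_eq_norm_sq]
  have hf := norm_add_sq (𝕜 := 𝕜) (f - h) h
  rw [sub_add_cancel] at hf
  rw [hu, norm_add_sq (𝕜 := 𝕜), hcross, hRh]
  linarith

theorem sum_norm_inner_sq_eq {J₀ J₁ : Type*} [Fintype J₁] {e : J₀ ⊕ J₁ → E}
    (hPar : ∀ f : E, HasSum (fun j => ‖⟪e j, f⟫_𝕜‖ ^ 2) (‖f‖ ^ 2))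
    (b : HilbertBasis J₀ 𝕜 E) {T : E →ₗ[𝕜] E} (hT : T.IsSymmetric)
    (he : ∀ j, e (Sum.inl j) = T (b j)) (f : E) :
    ∑ j : J₁, ‖⟪e (Sum.inr j), f⟫_𝕜‖ ^ 2 = ‖f‖ ^ 2 - ‖T f‖ ^ 2 := by
  have hJ₀ : HasSum (fun j => ‖⟪e (Sum.inl j), f⟫_𝕜‖ ^ 2) (‖T f‖ ^ 2) := by
    simpa only [he, hT _ f] using b.hasSum_norm_inner_sq_s16 (T f)
  exact eq_sub_of_add_eq' ((hPar f).unique (hJ₀.sum (hasSum_fintype _))).symm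

theorem hasSum_norm_sq_dilation {J₀ J₁ : Type*} [Fintype J₁] {e : J₀ ⊕ J₁ → E}
    (b : HilbertBasis J₀ 𝕜 E) {R S T : E →ₗ[𝕜] E} (hR : R.IsSymmetric) (hT : T.IsSymmetric)
    (hTS : Function.LeftInverse T S) (hR2 : ∀ x, R (R x) = S (S x) - x)
    (he : ∀ j, e (Sum.inl j) = T (b j))
    (hdefect : ∀ f, ∑ j : J₁, ‖⟪e (Sum.inr j), f⟫_𝕜‖ ^ 2 = ‖f‖ ^ 2 - ‖T f‖ ^ 2)
    {s : J₁ → E} (hs : ∀ j, R (s j) = e (Sum.inr j)) (f h : E) :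
    HasSum (fun j : J₀ ⊕ J₁ =>
      ‖Sum.elim
          (fun j₀ : J₀ => ⟪e (Sum.inl j₀), f⟫_𝕜 + ⟪R (e (Sum.inl j₀)), R h⟫_𝕜)
          (fun j₁ : J₁ => ⟪e (Sum.inr j₁), f⟫_𝕜 + ⟪-(s j₁), R h⟫_𝕜) j‖ ^ 2)
      (‖f‖ ^ 2 + ‖R h‖ ^ 2) := by
  have hJ₀ (j : J₀) :
      ⟪e (Sum.inl j), f⟫_𝕜 + ⟪R (e (Sum.inl j)), R h⟫_𝕜 = ⟪b j, T f + T (R (R h))⟫_𝕜 := by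
    rw [he, hR, hT, hT, inner_add_right]
  have hJ₁ (j : J₁) : ⟪e (Sum.inr j), f⟫_𝕜 + ⟪-s j, R h⟫_𝕜 = ⟪e (Sum.inr j), f - h⟫_𝕜 := by
    rw [inner_neg_left, ← hR, hs, inner_sub_right, sub_eq_add_neg]
  rw [← norm_sq_add_defect_eq hR hT hTS hR2, ← hdefect]
  refine HasSum.sum ?_ ?_
  · simpa only [Function.comp_def, Sum.elim_inl, hJ₀] using
      b.hasSum_norm_inner_sq_s16 (T f + T (R (R h)))
  · simpa only [Function.comp_def, Sum.elim_inr, hJ₁] using hasSum_fintype _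

end

theorem statement16_general
    {K : Type*} [NormedAddCommGroup K] [InnerProductSpace ℂ K]
    {J₀ J₁ : Type*} [Fintype J₁]
    (e : J₀ ⊕ J₁ → K)
    (hPar : ∀ f : K, HasSum (fun j => ‖⟪e j, f⟫_ℂ‖ ^ 2) (‖f‖ ^ 2))
    (b : HilbertBasis J₀ ℂ K)
    (T Tinv : K →L[ℂ] K) (hT : T.IsPositive)
    (hTinv₁ : T ∘L Tinv = 1) (hTinv₂ : Tinv ∘L T = 1)
    (he : ∀ j : J₀, e (Sum.inl j) = T (b j))
    (R : K →L[ℂ] K) (hR : R.IsPositive) (hR2 : R ∘L R = Tinv ∘L Tinv - 1)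
    (M₁ : Submodule ℂ K)
    (hM₁ : M₁ = Submodule.span ℂ (Set.range fun j : J₁ => e (Sum.inr j))) :
    (∀ j : J₁, ∃! s : K, s ∈ M₁ ∧ R s = e (Sum.inr j)) ∧
    ∀ s : J₁ → K, (∀ j, s j ∈ M₁ ∧ R (s j) = e (Sum.inr j)) →
      ∀ f g : K, g ∈ M₁ →
        HasSum (fun j : J₀ ⊕ J₁ =>
          ‖Sum.elim
              (fun j₀ : J₀ => ⟪e (Sum.inl j₀), f⟫_ℂ + ⟪R (e (Sum.inl j₀)), g⟫_ℂ)
              (fun j₁ : J₁ => ⟪e (Sum.inr j₁), f⟫_ℂ + ⟪-(s j₁), g⟫_ℂ) j‖ ^ 2)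
          (‖f‖ ^ 2 + ‖g‖ ^ 2) := by
  have hTS : Function.LeftInverse T Tinv := fun x => by simpa using DFunLike.congr_fun hTinv₁ x
  have hST : Function.LeftInverse Tinv T := fun x => by simpa using DFunLike.congr_fun hTinv₂ x
  have hRR : ∀ x, R (R x) = Tinv (Tinv x) - x := fun x => by simpa using DFunLike.congr_fun hR2 x
  have hdefect (f : K) : ∑ j : J₁, ‖⟪e (Sum.inr j), f⟫_ℂ‖ ^ 2 = ‖f‖ ^ 2 - ‖T f‖ ^ 2 :=
    sum_norm_inner_sq_eq hPar b hT.isSymmetric he f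
  have hker : LinearMap.ker (R : K →ₗ[ℂ] K) = M₁ᗮ :=
    hM₁ ▸ ker_eq_orthogonal_span_of_mul_self_eq hR.isSymmetric hT.isSymmetric hTS hST hRR hdefect
  have : FiniteDimensional ℂ M₁ := hM₁ ▸ FiniteDimensional.span_of_finite ℂ (Set.finite_range _)
  have hsolve {y : K} (hy : y ∈ M₁) : ∃! x, x ∈ M₁ ∧ R x = y :=
    hR.isSymmetric.existsUnique_mem_apply_eq hker hy
  refine ⟨fun j => hsolve (hM₁ ▸ Submodule.subset_span ⟨j, rfl⟩), fun s hs f g hg => ?_⟩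
  obtain ⟨h, -, rfl⟩ := (hsolve hg).exists
  exact hasSum_norm_sq_dilation b hR.isSymmetric hT.isSymmetric hTS hRR he hdefect
    (fun j => (hs j).2) f h

/-- Near-Riesz basis setting: `(e j)`, `j ∈ J₀ ⊔ J₁` with `J₁` finite, is a
Parseval frame in `K`, `(b j)` an orthonormal basis with `e j = T (b j)` for `j ∈ J₀` (`T`
positive with bounded inverse `Tinv`), `M₁ = span{e_j : j ∈ J₁}`, and `R = (T⁻² − I)^{1/2}`.
Then for each `j ∈ J₁` there is a unique `s_j ∈ M₁` with `R s_j = e_j`, and the family of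
vectors of `K ⊕ M₁` consisting of `(e j, R (e j))` for `j ∈ J₀` together with `(e j, −s_j)`
for `j ∈ J₁` is a Parseval frame of `K ⊕ M₁` (with inner product
`⟨(f₁,g₁),(f₂,g₂)⟩ = ⟨f₁,f₂⟩ + ⟨g₁,g₂⟩`). -/
theorem statement16
    {K : Type*} [NormedAddCommGroup K] [InnerProductSpace ℂ K] [CompleteSpace K]
    {J₀ J₁ : Type*} [Countable J₀] [Fintype J₁]
    (e : J₀ ⊕ J₁ → K)
    (hPar : ∀ f : K, HasSum (fun j => ‖⟪e j, f⟫_ℂ‖ ^ 2) (‖f‖ ^ 2))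
    (b : HilbertBasis J₀ ℂ K)
    (T Tinv : K →L[ℂ] K) (hT : T.IsPositive)
    (hTinv₁ : T ∘L Tinv = 1) (hTinv₂ : Tinv ∘L T = 1)
    (he : ∀ j : J₀, e (Sum.inl j) = T (b j))
    (R : K →L[ℂ] K) (hR : R.IsPositive) (hR2 : R ∘L R = Tinv ∘L Tinv - 1)
    (M₁ : Submodule ℂ K)
    (hM₁ : M₁ = Submodule.span ℂ (Set.range fun j : J₁ => e (Sum.inr j))) :
    (∀ j : J₁, ∃! s : K, s ∈ M₁ ∧ R s = e (Sum.inr j)) ∧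
    ∀ s : J₁ → K, (∀ j, s j ∈ M₁ ∧ R (s j) = e (Sum.inr j)) →
      ∀ f g : K, g ∈ M₁ →
        HasSum (fun j : J₀ ⊕ J₁ =>
          ‖Sum.elim
              (fun j₀ : J₀ => ⟪e (Sum.inl j₀), f⟫_ℂ + ⟪R (e (Sum.inl j₀)), g⟫_ℂ)
              (fun j₁ : J₁ => ⟪e (Sum.inr j₁), f⟫_ℂ + ⟪-(s j₁), g⟫_ℂ) j‖ ^ 2)
          (‖f‖ ^ 2 + ‖g‖ ^ 2) :=
  statement16_general e hPar b T Tinv hT hTinv₁ hTinv₂ he R hR hR2 M₁ hM₁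
end

section
/- Let (φ_j)_{j∈J} be a frame in a complex Hilbert space K with frame operator S and analysis operator θ, and let A > 0. Then (φ_j) has an A-tight dual frame — i.e., a frame (ψ_j)_{j∈J} with ∑_{j∈J} |⟨f, ψ_j⟩|² = A‖f‖² for all f ∈ K and f = ∑_{j∈J} ⟨f, ψ_j⟩ φ_j for all f ∈ K — if and only if A·S − I is a nonnegative operator (⟨A·S f, f⟩ ≥ ‖f‖² for all f) and the Hilbert-space dimension of the closure of the range of I − (1/A)·S⁻¹ is at most the Hilbert-space dimension of the orthogonal complement of the range of θ in ℓ²(J). -/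
/-! Let `θ` be the analysis operator of `φ`, so that `S = θ† θ`. A family `ψ` is an `A`-tight
dual frame of `φ` exactly when its analysis operator `U` satisfies `‖U f‖² = A ‖f‖²` and
`θ† U = 1`. Such a `U` is `θ S⁻¹ + V` with `V` taking values in `(range θ)ᗮ = ker θ†`, and
Pythagoras turns tightness into `‖V f‖² = ⟪f, (A - S⁻¹) f⟫`. A map `V` with this property exists
iff `A - S⁻¹ ≥ 0` (which is `A S ≥ 1`, inversion being antitone on positive invertible operators)
and `V = W √(A - S⁻¹)` for an isometry `W` from the closure of the range of `√(A - S⁻¹)`, which is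
that of `A - S⁻¹`, into `(range θ)ᗮ`. -/

open scoped InnerProductSpace InnerProduct lp
open ContinuousLinearMap RCLike

theorem lp.hasSum_norm_sq {J : Type*} {F : J → Type*} [∀ j, NormedAddCommGroup (F j)]
    (x : lp F 2) : HasSum (fun j => ‖x j‖ ^ 2) (‖x‖ ^ 2) := by
  simpa using lp.hasSum_norm (p := 2) (by norm_num) x

theorem nonempty_linearIsometry_closure_range_iff {𝕜 E F G : Type*} [NontriviallyNormedField 𝕜]
    [NormedAddCommGroup E] [NormedSpace 𝕜 E] [NormedAddCommGroup F] [NormedSpace 𝕜 F]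
    [NormedAddCommGroup G] [NormedSpace 𝕜 G] [CompleteSpace G] (R : E →L[𝕜] F) :
    Nonempty (R.range.topologicalClosure →ₗᵢ[𝕜] G) ↔ ∃ V : E →L[𝕜] G, ∀ f, ‖V f‖ = ‖R f‖ := by
  set M := R.range.topologicalClosure
  let e : E →L[𝕜] M := R.codRestrict M fun f => R.range.le_topologicalClosure (R.mem_range_self f)
  constructor
  · rintro ⟨i⟩
    exact ⟨i.toContinuousLinearMap ∘L e, fun f => i.norm_map (e f)⟩
  · rintro ⟨V, hV⟩
    have hdense : DenseRange e := Subtype.dense_iff.2 <| by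
      rw [← Set.range_comp]
      exact (Submodule.topologicalClosure_coe _).le
    let g := (V : E →ₗ[𝕜] G).extendOfNorm (e : E →ₗ[𝕜] M)
    have hge (f : E) : g (e f) = V f :=
      LinearMap.extendOfNorm_eq hdense ⟨1, fun f => (one_mul ‖e f‖).symm ▸ (hV f).le⟩ f
    have hg (x : M) : ‖g x‖ = ‖x‖ := by
      refine hdense.induction_on x (isClosed_eq (by fun_prop) continuous_norm) fun f => ?_
      rw [hge, hV]
      rfl
    exact ⟨⟨g.toLinearMap, hg⟩⟩

section InnerProductSpace

variable {𝕜 E F : Type*} [RCLike 𝕜] [NormedAddCommGroup E] [InnerProductSpace 𝕜 E]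
  [NormedAddCommGroup F] [InnerProductSpace 𝕜 F]

theorem ContinuousLinearMap.one_le_iff_forall_norm_sq_le {T : E →L[𝕜] E} (hT : T.IsSymmetric) :
    1 ≤ T ↔ ∀ f, ‖f‖ ^ 2 ≤ re ⟪f, T f⟫_𝕜 := by
  have hT1 : (T - 1).IsSymmetric := by
    rw [toLinearMap_sub]
    exact hT.sub LinearMap.IsSymmetric.one
  simp only [le_def, isPositive_def, hT1, true_and, reApplyInnerSelf, sub_apply, one_apply_eq_self,
    inner_sub_left, map_sub, sub_nonneg, inner_re_symm (T _), inner_self_eq_norm_sq]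

theorem ContinuousLinearMap.IsPositive.of_comp_eq_one {S Sinv : E →L[𝕜] E} (hS : S.IsPositive)
    (h : S ∘L Sinv = 1) : Sinv.IsPositive := by
  have hSSinv (f : E) : S (Sinv f) = f := congr($h f)
  refine ⟨fun f g => ?_, fun f => ?_⟩
  · calc ⟪Sinv f, g⟫_𝕜 = ⟪Sinv f, S (Sinv g)⟫_𝕜 := by rw [hSSinv]
      _ = ⟪f, Sinv g⟫_𝕜 := by rw [← hS.inner_left_eq_inner_right, hSSinv]
  · simpa only [reApplyInnerSelf, hSSinv, inner_re_symm] using hS.re_inner_nonneg_left (Sinv f)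

section AnalysisOperator

variable {J : Type*}

theorem exists_analysisOperator_of_bessel (φ : J → E) (B : ℝ)
    (hφ : ∀ f, ∃ s, HasSum (fun j => ‖⟪φ j, f⟫_𝕜‖ ^ 2) s ∧ s ≤ B * ‖f‖ ^ 2) :
    ∃ θ : E →L[𝕜] ℓ²(J, 𝕜), ∀ f j, θ f j = ⟪φ j, f⟫_𝕜 := by
  choose s hs hsB using hφ
  have hmem (f : E) : Memℓp (fun j => ⟪φ j, f⟫_𝕜) 2 :=
    memℓp_gen (by simpa using (hs f).summable)
  let L : E →ₗ[𝕜] ℓ²(J, 𝕜) :=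
    { toFun f := ⟨_, hmem f⟩
      map_add' f g := lp.ext <| funext fun j => inner_add_right _ _ _
      map_smul' c f := lp.ext <| funext fun j => inner_smul_right _ _ _ }
  refine ⟨L.mkContinuous √B fun f => ?_, fun _ _ => rfl⟩
  have hLf : ‖L f‖ ^ 2 ≤ B * ‖f‖ ^ 2 := (lp.hasSum_norm_sq (L f)).unique (hs f) ▸ hsB f
  calc ‖L f‖ = √(‖L f‖ ^ 2) := (Real.sqrt_sq (norm_nonneg _)).symm
    _ ≤ √(B * ‖f‖ ^ 2) := Real.sqrt_le_sqrt hLf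
    _ = √B * ‖f‖ := by rw [Real.sqrt_mul' _ (sq_nonneg _), Real.sqrt_sq (norm_nonneg _)]

variable [CompleteSpace E] {φ : J → E} {θ : E →L[𝕜] ℓ²(J, 𝕜)}

theorem adjoint_analysisOperator_single [DecidableEq J] (hθ : ∀ f j, θ f j = ⟪φ j, f⟫_𝕜)
    (j : J) (c : 𝕜) : adjoint θ (lp.single 2 j c) = c • φ j :=
  ext_inner_right 𝕜 fun f => by
    rw [adjoint_inner_left, lp.inner_single_left, hθ, inner_smul_left, RCLike.inner_apply, mul_comm]

theorem hasSum_adjoint_analysisOperator_apply (hθ : ∀ f j, θ f j = ⟪φ j, f⟫_𝕜)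
    (x : ℓ²(J, 𝕜)) : HasSum (fun j => x j • φ j) (adjoint θ x) := by
  classical
  simpa only [Function.comp_def, adjoint_analysisOperator_single hθ] using
    (lp.hasSum_single (by norm_num) x).mapL (adjoint θ)

theorem adjoint_comp_analysisOperator {ψ : J → E} {θ' : E →L[𝕜] ℓ²(J, 𝕜)} {T : E →L[𝕜] E}
    (hθ : ∀ f j, θ f j = ⟪φ j, f⟫_𝕜) (hθ' : ∀ f j, θ' f j = ⟪ψ j, f⟫_𝕜)
    (hT : ∀ f, HasSum (fun j => ⟪ψ j, f⟫_𝕜 • φ j) (T f)) : θ† ∘L θ' = T :=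
  ext fun f => (hasSum_adjoint_analysisOperator_apply hθ (θ' f)).unique <| by
    simpa only [hθ'] using hT f

theorem exists_tight_dual_iff (hθ : ∀ f j, θ f j = ⟪φ j, f⟫_𝕜) (A : ℝ) :
    (∃ ψ : J → E, (∀ f, HasSum (fun j => ‖⟪ψ j, f⟫_𝕜‖ ^ 2) (A * ‖f‖ ^ 2)) ∧
      ∀ f, HasSum (fun j => ⟪ψ j, f⟫_𝕜 • φ j) f) ↔
    ∃ U : E →L[𝕜] ℓ²(J, 𝕜), (∀ f, ‖U f‖ ^ 2 = A * ‖f‖ ^ 2) ∧ θ† ∘L U = 1 := by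
  constructor
  · rintro ⟨ψ, htight, hdual⟩
    obtain ⟨U, hU⟩ := exists_analysisOperator_of_bessel ψ A fun f => ⟨_, htight f, le_rfl⟩
    exact ⟨U, fun f => (lp.hasSum_norm_sq (U f)).unique (by simpa only [hU] using htight f),
      adjoint_comp_analysisOperator hθ hU hdual⟩
  · rintro ⟨U, hUnorm, hU⟩
    classical
    have hψ (f : E) (j : J) : ⟪adjoint U (lp.single 2 j 1), f⟫_𝕜 = U f j := by
      rw [adjoint_inner_left, lp.inner_single_left, RCLike.inner_apply, map_one, mul_one]
    refine ⟨fun j => adjoint U (lp.single 2 j 1), fun f => ?_, fun f => ?_⟩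
    · simpa only [hψ, hUnorm] using lp.hasSum_norm_sq (U f)
    · have hsyn := hasSum_adjoint_analysisOperator_apply hθ (U f)
      rw [← comp_apply, hU] at hsyn
      simp only [hψ]
      exact hsyn

end AnalysisOperator

variable [CompleteSpace E] [CompleteSpace F]

theorem ContinuousLinearMap.closure_range_adjoint_comp_self (T : E →L[𝕜] F) :
    (T† ∘L T).range.topologicalClosure = T†.range.topologicalClosure := by
  conv_rhs => rw [← orthogonal_ker, ← ker_adjoint_comp_self]
  rw [orthogonal_ker, adjoint_comp, adjoint_adjoint]

theorem norm_sq_apply_add_of_mem_orthogonal (θ : E →L[𝕜] F) {Sinv : E →L[𝕜] E}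
    (hSinv : (θ† ∘L θ) ∘L Sinv = 1) (f : E) {v : F} (hv : v ∈ θ.rangeᗮ) :
    ‖θ (Sinv f) + v‖ ^ 2 = re ⟪f, Sinv f⟫_𝕜 + ‖v‖ ^ 2 := by
  have horth : ⟪θ (Sinv f), v⟫_𝕜 = 0 :=
    Submodule.inner_right_of_mem_orthogonal (θ.mem_range_self _) hv
  have hf : (θ† ∘L θ) (Sinv f) = f := congr($hSinv f)
  rw [norm_add_sq (𝕜 := 𝕜), horth, map_zero, mul_zero, add_zero,
    apply_norm_sq_eq_inner_adjoint_left, hf, inner_re_symm]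

theorem exists_tight_rightInverse_adjoint_iff_exists_orthogonal (θ : E →L[𝕜] F) {Sinv : E →L[𝕜] E}
    (hSinv : (θ† ∘L θ) ∘L Sinv = 1) (A : ℝ) :
    (∃ U : E →L[𝕜] F, (∀ f, ‖U f‖ ^ 2 = A * ‖f‖ ^ 2) ∧ θ† ∘L U = 1) ↔
      ∃ V : E →L[𝕜] θ.rangeᗮ, ∀ f, ‖V f‖ ^ 2 = A * ‖f‖ ^ 2 - re ⟪f, Sinv f⟫_𝕜 := by
  have hpyth := norm_sq_apply_add_of_mem_orthogonal θ hSinv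
  have hθSinv (f : E) : adjoint θ (θ (Sinv f)) = f := congr($hSinv f)
  constructor
  · rintro ⟨U, hUnorm, hU⟩
    have hmem (f : E) : (U - θ ∘L Sinv) f ∈ θ.rangeᗮ := by
      have hUf : adjoint θ (U f) = f := congr($hU f)
      rw [orthogonal_range, LinearMap.mem_ker, coe_coe, sub_apply, map_sub, comp_apply, hUf,
        hθSinv, sub_self]
    refine ⟨(U - θ ∘L Sinv).codRestrict _ hmem, fun f => ?_⟩
    have hUf := hpyth f (hmem f)
    rw [sub_apply, comp_apply, add_sub_cancel, hUnorm] at hUf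
    rw [Submodule.coe_norm, coe_codRestrict_apply, sub_apply, comp_apply, hUf]
    ring
  · rintro ⟨V, hV⟩
    have hker : θ† ∘L θ.rangeᗮ.subtypeL = 0 := by
      ext v
      exact (orthogonal_range θ ▸ v.2 : v.1 ∈ (θ†).ker)
    refine ⟨θ ∘L Sinv + θ.rangeᗮ.subtypeL ∘L V, fun f => ?_, ?_⟩
    · rw [add_apply, comp_apply, comp_apply, Submodule.subtypeL_apply, hpyth f (V f).2,
        ← Submodule.coe_norm, hV]
      ring
    · rw [comp_add, ← comp_assoc, ← comp_assoc, hSinv, hker, zero_comp, add_zero]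

end InnerProductSpace

section Complex

open scoped ComplexOrder

variable {K H : Type*} [NormedAddCommGroup K] [InnerProductSpace ℂ K] [CompleteSpace K]
  [NormedAddCommGroup H] [InnerProductSpace ℂ H] [CompleteSpace H]

theorem ContinuousLinearMap.IsPositive.nonempty_linearIsometry_closure_range_iff {D : K →L[ℂ] K}
    (hD : D.IsPositive) {G : Type*} [NormedAddCommGroup G] [NormedSpace ℂ G] [CompleteSpace G] :
    Nonempty (D.range.topologicalClosure →ₗᵢ[ℂ] G) ↔
      ∃ V : K →L[ℂ] G, ∀ f, ‖V f‖ ^ 2 = (⟪f, D f⟫_ℂ).re := by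
  set R := CFC.sqrt D
  have hR : R† = R := (IsSelfAdjoint.of_nonneg (CFC.sqrt_nonneg D)).adjoint_eq
  have hRR : R† ∘L R = D := by
    rw [hR]
    exact CFC.sqrt_mul_sqrt_self D ((nonneg_iff_isPositive D).2 hD)
  have hrange : D.range.topologicalClosure = R.range.topologicalClosure := by
    rw [← hRR, closure_range_adjoint_comp_self, hR]
  have hnorm (f : K) : (⟪f, D f⟫_ℂ).re = ‖R f‖ ^ 2 := by
    rw [apply_norm_sq_eq_inner_adjoint_right, hRR, re_to_complex]
  rw [hrange, _root_.nonempty_linearIsometry_closure_range_iff]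
  simp_rw [hnorm, sq_eq_sq₀ (norm_nonneg _) (norm_nonneg _)]

theorem one_sub_inv_smul_isPositive_iff {S Sinv : K →L[ℂ] K} (hS : S.IsPositive)
    (h₁ : S ∘L Sinv = 1) (h₂ : Sinv ∘L S = 1) {A : ℝ} (hA : 0 < A) :
    (1 - (A : ℂ)⁻¹ • Sinv).IsPositive ↔ ∀ f, ‖f‖ ^ 2 ≤ (⟪f, (A : ℂ) • S f⟫_ℂ).re := by
  have hA' : (A : ℂ) ≠ 0 := by exact_mod_cast hA.ne'
  have hAS : ((A : ℂ) • S).IsPositive := hS.smul_of_nonneg (by exact_mod_cast hA.le)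
  let u : (K →L[ℂ] K)ˣ :=
    { val := (A : ℂ) • S
      inv := (A : ℂ)⁻¹ • Sinv
      val_inv := by
        rw [mul_def, smul_comp, comp_smul, h₁, smul_smul, mul_inv_cancel₀ hA', one_smul]
      inv_val := by
        rw [mul_def, smul_comp, comp_smul, h₂, smul_smul, inv_mul_cancel₀ hA', one_smul] }
  change (↑u⁻¹ : K →L[ℂ] K) ≤ 1 ↔ _
  rw [CStarAlgebra.inv_le_one_iff_one_le ((nonneg_iff_isPositive _).2 hAS)]
  exact one_le_iff_forall_norm_sq_le hAS.isSymmetric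

theorem exists_tight_rightInverse_adjoint_iff (θ : K →L[ℂ] H) {Sinv : K →L[ℂ] K}
    (h₁ : (θ† ∘L θ) ∘L Sinv = 1) (h₂ : Sinv ∘L (θ† ∘L θ) = 1) {A : ℝ} (hA : 0 < A) :
    (∃ U : K →L[ℂ] H, (∀ f, ‖U f‖ ^ 2 = A * ‖f‖ ^ 2) ∧ θ† ∘L U = 1) ↔
      (∀ f, ‖f‖ ^ 2 ≤ (⟪f, (A : ℂ) • (θ† ∘L θ) f⟫_ℂ).re) ∧
        Nonempty ((1 - (A : ℂ)⁻¹ • Sinv).range.topologicalClosure →ₗᵢ[ℂ] θ.rangeᗮ) := by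
  have hS := isPositive_adjoint_comp_self θ
  have hA' : (A : ℂ) ≠ 0 := by exact_mod_cast hA.ne'
  have hA₀ : (0 : ℂ) ≤ A := by exact_mod_cast hA.le
  set P : K →L[ℂ] K := 1 - (A : ℂ)⁻¹ • Sinv
  have hPsymm : P.IsSymmetric := by
    rw [toLinearMap_sub]
    exact LinearMap.IsSymmetric.one.sub
      ((hS.of_comp_eq_one h₁).smul_of_nonneg (inv_nonneg.2 hA₀)).isSymmetric
  have hAP (f : K) : (⟪f, ((A : ℂ) • P) f⟫_ℂ).re = A * (⟪f, P f⟫_ℂ).re := by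
    rw [smul_apply, inner_smul_right, Complex.re_ofReal_mul]
  have hSinvP (f : K) : A * ‖f‖ ^ 2 - re ⟪f, Sinv f⟫_ℂ = (⟪f, ((A : ℂ) • P) f⟫_ℂ).re := by
    rw [hAP, sub_apply, one_apply_eq_self, smul_apply, inner_sub_right, inner_smul_right,
      Complex.sub_re, ← Complex.ofReal_inv, Complex.re_ofReal_mul, ← re_to_complex,
      inner_self_eq_norm_sq, mul_sub, mul_inv_cancel_left₀ hA.ne', re_to_complex]
  have hrange : ((A : ℂ) • P).range = P.range := by
    rw [toLinearMap_smul, LinearMap.range_smul _ _ hA']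
  rw [exists_tight_rightInverse_adjoint_iff_exists_orthogonal θ h₁,
    ← one_sub_inv_smul_isPositive_iff hS h₁ h₂ hA, ← hrange]
  simp_rw [hSinvP]
  constructor
  · rintro ⟨V, hV⟩
    have hP : P.IsPositive := ⟨hPsymm, fun f => by
      rw [reApplyInnerSelf, inner_re_symm]
      exact nonneg_of_mul_nonneg_right (hAP f ▸ hV f ▸ sq_nonneg _) hA⟩
    exact ⟨hP, (hP.smul_of_nonneg hA₀).nonempty_linearIsometry_closure_range_iff.2 ⟨V, hV⟩⟩
  · rintro ⟨hP, hi⟩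
    exact (hP.smul_of_nonneg hA₀).nonempty_linearIsometry_closure_range_iff.1 hi

end Complex

theorem statement18_general
    {K : Type*} [NormedAddCommGroup K] [InnerProductSpace ℂ K] [CompleteSpace K]
    {J : Type*}
    (φ : J → K) (A₀ B₀ : ℝ)
    (hFrame : ∀ f : K, ∃ s : ℝ, HasSum (fun j => ‖⟪φ j, f⟫_ℂ‖ ^ 2) s ∧
      A₀ * ‖f‖ ^ 2 ≤ s ∧ s ≤ B₀ * ‖f‖ ^ 2)
    (S Sinv : K →L[ℂ] K)
    (hS : ∀ f : K, HasSum (fun j => ⟪φ j, f⟫_ℂ • φ j) (S f))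
    (hSinv₁ : S ∘L Sinv = 1) (hSinv₂ : Sinv ∘L S = 1)
    (Θ : Submodule ℂ (lp (fun _ : J => ℂ) 2))
    (hΘ : ∀ x : lp (fun _ : J => ℂ) 2, x ∈ Θ ↔ ∃ f : K, ∀ j, x j = ⟪φ j, f⟫_ℂ)
    (A : ℝ) (hA : 0 < A) :
    (∃ ψ : J → K,
      (∀ f : K, HasSum (fun j => ‖⟪ψ j, f⟫_ℂ‖ ^ 2) (A * ‖f‖ ^ 2)) ∧
      ∀ f : K, HasSum (fun j => ⟪ψ j, f⟫_ℂ • φ j) f) ↔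
    ((∀ f : K, ‖f‖ ^ 2 ≤ (⟪f, (A : ℂ) • S f⟫_ℂ).re) ∧
      Nonempty ((LinearMap.range
          ((1 - ((A : ℂ))⁻¹ • Sinv : K →L[ℂ] K) : K →ₗ[ℂ] K)).topologicalClosure →ₗᵢ[ℂ] Θᗮ)) := by
  obtain ⟨θ, hθ⟩ := exists_analysisOperator_of_bessel φ B₀ fun f =>
    (hFrame f).imp fun _ hs => ⟨hs.1, hs.2.2⟩
  obtain rfl : θ† ∘L θ = S := adjoint_comp_analysisOperator hθ hθ hS
  obtain rfl : Θ = θ.range := by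
    ext x
    rw [hΘ, LinearMap.mem_range]
    refine exists_congr fun f => ?_
    simp only [coe_coe, lp.ext_iff, funext_iff, hθ, eq_comm]
  rw [exists_tight_dual_iff hθ, exists_tight_rightInverse_adjoint_iff θ hSinv₁ hSinv₂ hA]

/-- Let `(φ j)` be a frame in `K` with frame operator `S` (with bounded inverse
`Sinv`) and analysis-operator range `Θ ⊆ ℓ²(J)`, and let `A > 0`. Then `(φ j)` has an
`A`-tight dual frame (a family `ψ` with `∑ j, |⟨f, ψ_j⟩|² = A‖f‖²` and
`f = ∑ j, ⟨f, ψ_j⟩ φ_j` for all `f`) iff `A·S − I ≥ 0` (i.e. `⟨A·S f, f⟩ ≥ ‖f‖²` for all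
`f`) and the Hilbert-space dimension of the closure of the range of `I − (1/A)·S⁻¹` is at
most that of `Θᗮ` (expressed by a linear isometric embedding).
(The paper's inner product `(f, g)`, linear in the first argument, is `⟪g, f⟫_ℂ`.) -/
theorem statement18
    {K : Type*} [NormedAddCommGroup K] [InnerProductSpace ℂ K] [CompleteSpace K]
    {J : Type*} [Countable J]
    (φ : J → K) (A₀ B₀ : ℝ) (hA₀ : 0 < A₀) (hAB₀ : A₀ ≤ B₀)
    (hFrame : ∀ f : K, ∃ s : ℝ, HasSum (fun j => ‖⟪φ j, f⟫_ℂ‖ ^ 2) s ∧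
      A₀ * ‖f‖ ^ 2 ≤ s ∧ s ≤ B₀ * ‖f‖ ^ 2)
    (S Sinv : K →L[ℂ] K)
    (hS : ∀ f : K, HasSum (fun j => ⟪φ j, f⟫_ℂ • φ j) (S f))
    (hSinv₁ : S ∘L Sinv = 1) (hSinv₂ : Sinv ∘L S = 1)
    (Θ : Submodule ℂ (lp (fun _ : J => ℂ) 2))
    (hΘ : ∀ x : lp (fun _ : J => ℂ) 2, x ∈ Θ ↔ ∃ f : K, ∀ j, x j = ⟪φ j, f⟫_ℂ)
    (A : ℝ) (hA : 0 < A) :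
    (∃ ψ : J → K,
      (∀ f : K, HasSum (fun j => ‖⟪ψ j, f⟫_ℂ‖ ^ 2) (A * ‖f‖ ^ 2)) ∧
      ∀ f : K, HasSum (fun j => ⟪ψ j, f⟫_ℂ • φ j) f) ↔
    ((∀ f : K, ‖f‖ ^ 2 ≤ (⟪f, (A : ℂ) • S f⟫_ℂ).re) ∧
      Nonempty ((LinearMap.range
          ((1 - ((A : ℂ))⁻¹ • Sinv : K →L[ℂ] K) : K →ₗ[ℂ] K)).topologicalClosure →ₗᵢ[ℂ] Θᗮ)) :=
  statement18_general φ A₀ B₀ hFrame S Sinv hS hSinv₁ hSinv₂ Θ hΘ A hA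
end

section
/- Let S be a bounded positive operator with bounded inverse on a complex Hilbert space K, and let Q be a bounded self-adjoint operator on K such that the operator S⁻¹Q is nonnegative, i.e., ⟨S⁻¹Q f, f⟩ ≥ 0 for all f ∈ K. Then Q commutes with S (Q S = S Q) and Q itself is nonnegative: ⟨Q f, f⟩ ≥ 0 for all f ∈ K. -/
open scoped InnerProductSpace ComplexOrder

/-!
Since `⟪f, S⁻¹ Q f⟫` is real for every `f`, the operator `S⁻¹ Q` is self-adjoint; as `S` and `Q`
are self-adjoint too, `S⁻¹ Q = (S⁻¹ Q)⋆ = Q S⁻¹`, so `Q` commutes with `S`. Then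
`Q = S (S⁻¹ Q)` is a product of two commuting nonnegative operators, hence nonnegative.
-/

theorem ContinuousLinearMap.isPositive_of_forall_inner_nonneg {E : Type*}
    [NormedAddCommGroup E] [InnerProductSpace ℂ E] {T : E →L[ℂ] E}
    (hT : ∀ x, 0 ≤ ⟪x, T x⟫_ℂ) : T.IsPositive := by
  refine (isPositive_iff_complex T).mpr fun x ↦ ?_
  obtain ⟨hre, him⟩ := Complex.nonneg_iff.mp (hT x)
  have hself : ⟪T x, x⟫_ℂ = ⟪x, T x⟫_ℂ := by
    rw [← inner_conj_symm, Complex.conj_eq_iff_im.mpr him.symm]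
  rw [hself]
  exact ⟨Complex.ext (by simp) (by simp [him]), hre⟩

theorem Commute.of_isSelfAdjoint_invOf_mul {R : Type*} [Monoid R] [StarMul R] {a b : R}
    [Invertible a] (ha : IsSelfAdjoint a) (hb : IsSelfAdjoint b) (hab : IsSelfAdjoint (⅟a * b)) :
    Commute a b := by
  have hinv : Commute (⅟a) b := by
    simpa [Commute, SemiconjBy, star_mul, hb.star_eq, ha.invOf.star_eq] using hab.star_eq.symm
  simpa using hinv.invOf_left

theorem nonneg_of_commute_of_nonneg_invOf_mul {A : Type*} [CStarAlgebra A] [PartialOrder A]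
    [StarOrderedRing A] {a b : A} [Invertible a] (ha : 0 ≤ a) (hab : Commute a b)
    (hinv : 0 ≤ ⅟a * b) : 0 ≤ b := by
  simpa using ((Commute.refl a).invOf_right.mul_right hab).mul_nonneg ha hinv

/-- Let `S` be a bounded positive operator with bounded inverse `Sinv` on a
complex Hilbert space `K`, and `Q` a bounded self-adjoint operator such that `S⁻¹Q` is
nonnegative, i.e. `⟨S⁻¹ Q f, f⟩ ≥ 0` (as a complex number) for all `f`. Then `Q` commutes
with `S` and `Q` itself is nonnegative: `⟨Q f, f⟩ ≥ 0` for all `f`.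
(The paper's inner product `(f, g)`, linear in the first argument, is `⟪g, f⟫_ℂ`, so the
paper's `⟨S⁻¹Q f, f⟩` is `⟪f, S⁻¹ (Q f)⟫_ℂ`.) -/
theorem statement19
    {K : Type*} [NormedAddCommGroup K] [InnerProductSpace ℂ K] [CompleteSpace K]
    (S Sinv : K →L[ℂ] K) (hS : S.IsPositive)
    (hSinv₁ : S ∘L Sinv = 1) (hSinv₂ : Sinv ∘L S = 1)
    (Q : K →L[ℂ] K) (hQ : IsSelfAdjoint Q)
    (hpos : ∀ f : K, 0 ≤ ⟪f, Sinv (Q f)⟫_ℂ) :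
    Q ∘L S = S ∘L Q ∧ ∀ f : K, 0 ≤ ⟪f, Q f⟫_ℂ := by
  let : Invertible S := ⟨Sinv, hSinv₂, hSinv₁⟩
  have hS₀ : 0 ≤ S := (ContinuousLinearMap.nonneg_iff_isPositive S).mpr hS
  have hSinvQ : 0 ≤ ⅟S * Q := (ContinuousLinearMap.nonneg_iff_isPositive _).mpr
    (ContinuousLinearMap.isPositive_of_forall_inner_nonneg hpos)
  have hcomm : Commute S Q :=
    .of_isSelfAdjoint_invOf_mul hS₀.isSelfAdjoint hQ hSinvQ.isSelfAdjoint
  have hQ₀ : 0 ≤ Q := nonneg_of_commute_of_nonneg_invOf_mul hS₀ hcomm hSinvQ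
  exact ⟨hcomm.eq.symm,
    ((ContinuousLinearMap.nonneg_iff_isPositive Q).mp hQ₀).inner_nonneg_right⟩
end
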